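/- arXiv:2208.12237 — 9 statements merged into one kernel-verified Lean document; each statement's English description precedes it below -/
import Mathlib

section
/- There exist constants c, C > 0 such that for every ε ∈ (0, 1/2) and every z ∈ D = {w ∈ ℂ : |w − (1 − 4a²)| ≤ 2a} (with a = 1 + ε/2), setting r = |z − λ₂|, one has Re(z − λ₂⁻¹) < 0 and c(r + √ε) ≤ |z − λ₂⁻¹| ≤ C(r + √ε), where λ₂ = −(2a² − 1) − 2a√(a² − 1). -/
/-- There exist constants c, C > 0 such that for every ε ∈ (0, 1/2) and
every z ∈ D = {w ∈ ℂ : |w − (1 − 4a²)| ≤ 2a} (with a = 1 + ε/2), setting r = |z − λ₂|,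
one has Re(z − λ₂⁻¹) < 0 and c(r + √ε) ≤ |z − λ₂⁻¹| ≤ C(r + √ε),
where λ₂ = −(2a² − 1) − 2a√(a² − 1). -/
theorem stmt3 :
    ∃ c C : ℝ, 0 < c ∧ 0 < C ∧
      ∀ ε : ℝ, ε ∈ Set.Ioo (0 : ℝ) (1/2) →
        ∀ a l₂ : ℝ,
          a = 1 + ε/2 →
          l₂ = -(2*a^2 - 1) - 2*a*Real.sqrt (a^2 - 1) →
          ∀ z : ℂ, ‖z - (1 - 4*(a : ℂ)^2)‖ ≤ 2*a →
            (z - ((l₂⁻¹ : ℝ) : ℂ)).re < 0 ∧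
            c * (‖z - (l₂ : ℂ)‖ + Real.sqrt ε)
              ≤ ‖z - ((l₂⁻¹ : ℝ) : ℂ)‖ ∧
            ‖z - ((l₂⁻¹ : ℝ) : ℂ)‖
              ≤ C * (‖z - (l₂ : ℂ)‖ + Real.sqrt ε) := by
  refine ⟨1/4, 10, by norm_num, by norm_num, ?_⟩
  rintro ε ⟨hε0, hε1⟩ a l₂ ha hl z hz
  set s : ℝ := Real.sqrt (a^2 - 1) with hs
  have ha1 : 1 < a := by rw [ha]; linarith
  have ha2 : a < 5/4 := by rw [ha]; linarith
  have ha21 : 0 < a^2 - 1 := by nlinarith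
  have hs2 : s^2 = a^2 - 1 := Real.sq_sqrt ha21.le
  have hspos : 0 < s := Real.sqrt_pos.mpr ha21
  have hεa : ε ≤ a^2 - 1 := by nlinarith
  have hεs : Real.sqrt ε ≤ s := Real.sqrt_le_sqrt hεa
  have hsε : s ≤ 2 * Real.sqrt ε := by
    have h4 : a^2 - 1 ≤ 4 * ε := by nlinarith
    have := Real.sqrt_le_sqrt h4
    calc s ≤ Real.sqrt (4 * ε) := this
      _ = 2 * Real.sqrt ε := by
          rw [show (4:ℝ) * ε = (2*Real.sqrt ε)^2 by
            rw [mul_pow, Real.sq_sqrt hε0.le]; ring]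
          exact Real.sqrt_sq (by positivity)
  have hεpos : 0 < Real.sqrt ε := Real.sqrt_pos.mpr hε0
  -- inverse of l₂
  have hm : l₂⁻¹ = -(2*a^2 - 1) + 2*a*s := by
    have hmul : l₂ * (-(2*a^2 - 1) + 2*a*s) = 1 := by
      rw [hl]; nlinarith [hs2]
    exact inv_eq_of_mul_eq_one_right hmul
  set m : ℝ := l₂⁻¹ with hmdef
  -- distances among the real points, as complex absolute values
  have F1 : ‖(m : ℂ) - (1 - 4*(a : ℂ)^2)‖ = 2*a*(a+s) := by
    have : (m : ℂ) - (1 - 4*(a : ℂ)^2) = ((m - (1 - 4*a^2) : ℝ) : ℂ) := by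
      push_cast; ring
    rw [this, Complex.norm_real, Real.norm_eq_abs, hm]
    rw [abs_of_nonneg (by nlinarith)]; ring
  have F2 : ‖(m : ℂ) - (l₂ : ℂ)‖ = 4*a*s := by
    have h : (m : ℂ) - (l₂ : ℂ) = ((4*a*s : ℝ) : ℂ) := by rw [hm, hl]; push_cast; ring
    rw [h, Complex.norm_real, Real.norm_eq_abs, abs_of_nonneg (by positivity)]
  set r : ℝ := ‖z - (l₂ : ℂ)‖ with hr
  set R : ℝ := ‖z - (m : ℂ)‖ with hR
  -- triangle inequalities
  have T1 : 2*a*(a+s) ≤ R + 2*a := by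
    calc 2*a*(a+s) = ‖(m : ℂ) - (1 - 4*(a : ℂ)^2)‖ := F1.symm
      _ ≤ ‖(m : ℂ) - z‖ + ‖z - (1 - 4*(a : ℂ)^2)‖ :=
          norm_sub_le_norm_sub_add_norm_sub _ _ _
      _ = R + ‖z - (1 - 4*(a : ℂ)^2)‖ := by rw [norm_sub_rev]
      _ ≤ R + 2*a := by linarith
  have hRlb : 2*a*(a - 1 + s) ≤ R := by linarith [T1]
  have T2 : r ≤ R + 4*a*s := by
    calc r ≤ ‖z - (m : ℂ)‖ + ‖(m : ℂ) - (l₂ : ℂ)‖ :=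
          norm_sub_le_norm_sub_add_norm_sub _ _ _
      _ = R + 4*a*s := by rw [F2]
  have T3 : R ≤ r + 4*a*s := by
    calc R ≤ ‖z - (l₂ : ℂ)‖ + ‖(l₂ : ℂ) - (m : ℂ)‖ :=
          norm_sub_le_norm_sub_add_norm_sub _ _ _
      _ = r + 4*a*s := by rw [norm_sub_rev (l₂ : ℂ) (m : ℂ), F2]
  have hR2as : 2*a*s ≤ R := by nlinarith
  refine ⟨?_, ?_, ?_⟩
  · -- real part negative
    have hre : z.re - (1 - 4*a^2) ≤ 2*a := by
      have h1 : |(z - (1 - 4*(a : ℂ)^2)).re| ≤ ‖z - (1 - 4*(a : ℂ)^2)‖ :=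
        Complex.abs_re_le_norm _
      have hc : (1 - 4*(a : ℂ)^2) = (((1 - 4*a^2 : ℝ)) : ℂ) := by push_cast; ring
      have h2 : (z - (1 - 4*(a : ℂ)^2)).re = z.re - (1 - 4*a^2) := by
        rw [hc, Complex.sub_re, Complex.ofReal_re]
      rw [h2] at h1
      have := (abs_le.mp (h1.trans hz)).2
      linarith
    have : (z - (m : ℂ)).re = z.re - m := by simp [Complex.sub_re]
    rw [this, hm]
    have haa : a ≤ a^2 := by nlinarith
    have h2as : 0 < 2*a*s := by positivity
    linarith
  · -- lower bound
    have h1 : r ≤ 3 * R := by linarith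
    have hsas : s ≤ a*s := le_mul_of_one_le_left hspos.le ha1.le
    have h2 : Real.sqrt ε ≤ R := by linarith
    linarith
  · -- upper bound
    have h3 : 4*a*s ≤ 10 * Real.sqrt ε := by
      have : a*s ≤ (5/4)*(2*Real.sqrt ε) := mul_le_mul ha2.le hsε hspos.le (by norm_num)
      linarith
    have : 0 ≤ r := norm_nonneg _
    linarith
end

section
/- There exist constants c, C > 0 such that for every ε ∈ (0, 1/2), every integer k ≥ 0, and every z ∈ D = {w ∈ ℂ : |w − (1 − 4a²)| ≤ 2a} (with a = 1 + ε/2), setting r = |z − λ₂|, λ = (2a² − 1) + 2a√(a² − 1), λ₂ = −λ, and I_k(z) = (z − λ₂⁻¹) − λ^{−k}(z − λ₂), one has c[(r + √ε)(1 − λ^{−k}) + √ε] ≤ |I_k(z)| ≤ C[(r + √ε)(1 − λ^{−k}) + √ε]. -/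
private lemma stmt4_aux_low (sε d s x y r A : ℝ)
    (hsε0 : 0 < sε) (hdlb : 4*sε ≤ d) (hs0 : 0 ≤ s) (hs1 : s ≤ 1)
    (hxd : x ≤ d/2) (hrxy : r ≤ |x| + |y|)
    (hAre : |s*x - d| ≤ A) (hAim : s*|y| ≤ A) :
    1/3 * ((r + sε) * s + sε) ≤ A := by
  have hd0 : 0 ≤ d := by linarith
  have hsx : s * x ≤ d/2 := by
    rcases le_total x 0 with h | h
    · have := mul_nonneg hs0 (neg_nonneg.mpr h)
      nlinarith
    · have := mul_nonneg (by linarith : (0:ℝ) ≤ 1 - s) h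
      nlinarith
  have h1 : d - s*x ≤ |s*x - d| := by rw [abs_sub_comm]; exact le_abs_self _
  have hkey1 : d/2 ≤ A := by linarith
  have hkey2 : s * |x| ≤ A := by
    rcases abs_cases x with ⟨hc, _⟩ | ⟨hc, hneg⟩
    · rw [hc]; linarith
    · rw [hc]
      have := mul_nonneg hs0 (neg_nonneg.mpr hneg.le)
      nlinarith
  have e1 : s * r ≤ s * |x| + s * |y| := by
    have h := mul_le_mul_of_nonneg_left hrxy hs0
    rw [mul_add] at h; exact h
  have e2 : s * sε ≤ sε := by nlinarith
  nlinarith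

private lemma stmt4_aux_up (sε d s r A : ℝ)
    (hsε0 : 0 < sε) (hdub : d ≤ 6*sε) (hs0 : 0 ≤ s) (hr0 : 0 ≤ r)
    (hup : A ≤ s*r + d) :
    A ≤ 6 * ((r + sε) * s + sε) := by
  nlinarith [mul_nonneg hs0 hr0, mul_nonneg hs0 hsε0.le]



/-- There exist constants c, C > 0 such that for every ε ∈ (0, 1/2),
every integer k ≥ 0, and every z ∈ D = {w ∈ ℂ : |w − (1 − 4a²)| ≤ 2a} (with a = 1 + ε/2),
setting r = |z − λ₂|, λ = (2a² − 1) + 2a√(a² − 1), λ₂ = −λ, and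
I_k(z) = (z − λ₂⁻¹) − λ^{−k}(z − λ₂), one has
c[(r + √ε)(1 − λ^{−k}) + √ε] ≤ |I_k(z)| ≤ C[(r + √ε)(1 − λ^{−k}) + √ε]. -/
theorem stmt4 :
    ∃ c C : ℝ, 0 < c ∧ 0 < C ∧
      ∀ ε : ℝ, ε ∈ Set.Ioo (0 : ℝ) (1/2) →
        ∀ a lam l₂ : ℝ,
          a = 1 + ε/2 →
          lam = (2*a^2 - 1) + 2*a*Real.sqrt (a^2 - 1) →
          l₂ = -lam →
          ∀ k : ℕ, ∀ z : ℂ, Norm.norm (z - (1 - 4*(a : ℂ)^2)) ≤ 2*a →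
            c * ((Norm.norm (z - (l₂ : ℂ)) + Real.sqrt ε) * (1 - lam⁻¹^k) + Real.sqrt ε)
              ≤ Norm.norm ((z - ((l₂⁻¹ : ℝ) : ℂ)) - ((lam⁻¹^k : ℝ) : ℂ) * (z - (l₂ : ℂ))) ∧
            Norm.norm ((z - ((l₂⁻¹ : ℝ) : ℂ)) - ((lam⁻¹^k : ℝ) : ℂ) * (z - (l₂ : ℂ)))
              ≤ C * ((Norm.norm (z - (l₂ : ℂ)) + Real.sqrt ε) * (1 - lam⁻¹^k) + Real.sqrt ε) := by
  refine ⟨1/3, 6, by norm_num, by norm_num, ?_⟩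
  rintro ε ⟨hε0, hε1⟩ a lam l₂ ha hlam hl2 k z hz
  have ha1 : 1 < a := by rw [ha]; linarith
  have ha5 : a ≤ 5/4 := by rw [ha]; linarith
  have haε : ε ≤ a^2 - 1 := by rw [ha]; nlinarith
  have haε2 : a^2 - 1 ≤ 36/25 * ε := by rw [ha]; nlinarith
  have hq0 : 0 ≤ Real.sqrt (a^2 - 1) := Real.sqrt_nonneg _
  have hq2 : Real.sqrt (a^2 - 1)^2 = a^2 - 1 := Real.sq_sqrt (by nlinarith)
  have hsε0 : 0 < Real.sqrt ε := Real.sqrt_pos.mpr hε0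
  have hqlb : Real.sqrt ε ≤ Real.sqrt (a^2 - 1) := Real.sqrt_le_sqrt haε
  have hqub : Real.sqrt (a^2 - 1) ≤ 6/5 * Real.sqrt ε := by
    have h1 : Real.sqrt (a^2-1) ≤ Real.sqrt (36/25 * ε) := Real.sqrt_le_sqrt haε2
    have h2 : Real.sqrt (36/25 * ε) = 6/5 * Real.sqrt ε := by
      rw [show (36/25:ℝ) * ε = (6/5)^2 * ε by norm_num,
        Real.sqrt_mul (by positivity) ε, Real.sqrt_sq (by norm_num)]
    rw [← h2]; exact h1
  set q : ℝ := Real.sqrt (a^2 - 1) with hq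
  set sε : ℝ := Real.sqrt ε with hsε
  have hlam1 : 1 < lam := by
    rw [hlam]
    nlinarith [mul_nonneg (by linarith : (0:ℝ) ≤ 2*a) hq0, ha1]
  have hinv : lam⁻¹ = 2*a^2 - 1 - 2*a*q := by
    have hmul : lam * (2*a^2 - 1 - 2*a*q) = 1 := by
      rw [hlam]; linear_combination (-(4*a^2:ℝ)) * hq2
    exact inv_eq_of_mul_eq_one_right hmul
  have hdval : lam - lam⁻¹ = 4*a*q := by rw [hinv, hlam]; ring
  have hdlb : 4*sε ≤ 4*a*q := by
    nlinarith [mul_nonneg (sub_nonneg.mpr ha1.le) hq0, hqlb]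
  have hdub : 4*a*q ≤ 6*sε := by
    nlinarith [mul_le_mul_of_nonneg_left hqub (by linarith : (0:ℝ) ≤ 4*a), hsε0.le]
  have hd0 : (0:ℝ) ≤ 4*a*q := by positivity
  -- t and s
  have hlinv0 : 0 < lam⁻¹ := inv_pos.mpr (by linarith)
  have hlinv1 : lam⁻¹ < 1 := by rw [inv_lt_one_iff₀]; right; exact hlam1
  have ht0 : (0:ℝ) ≤ lam⁻¹^k := by positivity
  have ht1 : lam⁻¹^k ≤ 1 := pow_le_one₀ hlinv0.le hlinv1.le
  have hs0 : (0:ℝ) ≤ 1 - lam⁻¹^k := by linarith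
  have hs1 : (1:ℝ) - lam⁻¹^k ≤ 1 := by linarith
  -- rewrite the main expression
  have hl2inv : l₂⁻¹ = -lam⁻¹ := by rw [hl2, inv_neg]
  have hI : (z - ((l₂⁻¹ : ℝ) : ℂ)) - ((lam⁻¹^k : ℝ) : ℂ) * (z - (l₂ : ℂ))
      = ((1 - lam⁻¹^k : ℝ) : ℂ) * (z - (l₂ : ℂ)) + ((lam⁻¹ - lam : ℝ) : ℂ) := by
    rw [hl2inv, hl2]; push_cast; ring
  have hrxy : Norm.norm (z - (l₂ : ℂ)) ≤ |(z - (l₂ : ℂ)).re| + |(z - (l₂ : ℂ)).im| :=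
    Complex.norm_le_abs_re_add_abs_im _
  have hr0 : 0 ≤ Norm.norm (z - (l₂ : ℂ)) := norm_nonneg _
  -- real and imaginary parts
  have hre : (((1 - lam⁻¹^k : ℝ):ℂ) * (z - (l₂ : ℂ)) + ((lam⁻¹ - lam : ℝ):ℂ)).re
      = (1 - lam⁻¹^k) * (z - (l₂ : ℂ)).re - (lam - lam⁻¹) := by
    rw [Complex.add_re, Complex.re_ofReal_mul, Complex.ofReal_re]; ring
  have him : (((1 - lam⁻¹^k : ℝ):ℂ) * (z - (l₂ : ℂ)) + ((lam⁻¹ - lam : ℝ):ℂ)).im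
      = (1 - lam⁻¹^k) * (z - (l₂ : ℂ)).im := by
    rw [Complex.add_im, Complex.im_ofReal_mul, Complex.ofReal_im, add_zero]
  have hAre : |(1 - lam⁻¹^k) * (z - (l₂ : ℂ)).re - (4*a*q)|
      ≤ Norm.norm (((1 - lam⁻¹^k : ℝ):ℂ) * (z - (l₂ : ℂ)) + ((lam⁻¹ - lam : ℝ):ℂ)) := by
    have h := Complex.abs_re_le_norm
      (((1 - lam⁻¹^k : ℝ):ℂ) * (z - (l₂ : ℂ)) + ((lam⁻¹ - lam : ℝ):ℂ))
    rw [hre, hdval] at h; exact h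
  have hAim : (1 - lam⁻¹^k) * |(z - (l₂ : ℂ)).im|
      ≤ Norm.norm (((1 - lam⁻¹^k : ℝ):ℂ) * (z - (l₂ : ℂ)) + ((lam⁻¹ - lam : ℝ):ℂ)) := by
    have h := Complex.abs_im_le_norm
      (((1 - lam⁻¹^k : ℝ):ℂ) * (z - (l₂ : ℂ)) + ((lam⁻¹ - lam : ℝ):ℂ))
    rw [him, abs_mul, abs_of_nonneg hs0] at h; exact h
  -- geometric fact: Re(z - l₂) ≤ d/2
  have hcast : (1 - 4*(a:ℂ)^2) = ((1 - 4*a^2 : ℝ) : ℂ) := by push_cast; ring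
  rw [hcast] at hz
  have hrez : z.re - (1 - 4*a^2) ≤ 2*a := by
    calc z.re - (1 - 4*a^2) = (z - ((1 - 4*a^2:ℝ):ℂ)).re := by
          rw [Complex.sub_re, Complex.ofReal_re]
      _ ≤ |(z - ((1 - 4*a^2:ℝ):ℂ)).re| := le_abs_self _
      _ ≤ Norm.norm (z - ((1 - 4*a^2:ℝ):ℂ)) := Complex.abs_re_le_norm _
      _ ≤ 2*a := hz
  have hxval : (z - (l₂ : ℂ)).re = z.re + lam := by
    rw [Complex.sub_re, Complex.ofReal_re, hl2]; ring
  have hxd : (z - (l₂ : ℂ)).re ≤ (4*a*q)/2 := by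
    rw [hxval, hlam]
    linarith [hrez, mul_nonneg (by linarith : (0:ℝ) ≤ a) (sub_nonneg.mpr ha1.le)]
  constructor
  · -- lower bound
    rw [hI]
    exact stmt4_aux_low sε (4*a*q) (1 - lam⁻¹^k) (z - (l₂ : ℂ)).re (z - (l₂ : ℂ)).im
      (Norm.norm (z - (l₂ : ℂ))) _ hsε0 hdlb hs0 hs1 hxd hrxy hAre hAim
  · -- upper bound
    rw [hI]
    have hup : Norm.norm (((1 - lam⁻¹^k : ℝ):ℂ) * (z - (l₂ : ℂ)) + ((lam⁻¹ - lam : ℝ):ℂ))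
        ≤ (1 - lam⁻¹^k) * Norm.norm (z - (l₂ : ℂ)) + 4*a*q := by
      calc Norm.norm (((1 - lam⁻¹^k : ℝ):ℂ) * (z - (l₂ : ℂ)) + ((lam⁻¹ - lam : ℝ):ℂ))
          ≤ Norm.norm (((1 - lam⁻¹^k : ℝ):ℂ) * (z - (l₂ : ℂ)))
            + Norm.norm ((lam⁻¹ - lam : ℝ):ℂ) := norm_add_le _ _
        _ = (1 - lam⁻¹^k) * Norm.norm (z - (l₂ : ℂ)) + 4*a*q := by
            rw [norm_mul, Complex.norm_real, Complex.norm_real, Real.norm_eq_abs, Real.norm_eq_abs,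
              abs_of_nonneg hs0, show lam⁻¹ - lam = -(4*a*q) by linarith, abs_neg,
              abs_of_nonneg hd0]
    exact stmt4_aux_up sε (4*a*q) (1 - lam⁻¹^k) (Norm.norm (z - (l₂ : ℂ))) _
      hsε0 hdub hs0 hr0 hup
end

section
/- Let ε ∈ (0, 1/2), a = 1 + ε/2, λ = (2a² − 1) + 2a√(a² − 1), λ₂ = −λ, and let ψ(z) = −1/z − 2(2a² − 1). Then the half-plane H = {z ∈ ℂ : Re z ≤ −1} satisfies ψ(H) ⊆ H (in particular 0 ∉ H, so all iterates ψ^k are well defined on H), and for every z ∈ H and every integer k ≥ 0 one has I_{2k}(z) ≠ 0 and ψ^k(z) = λ₂ + (λ₂² − 1) λ₂^{−2k−1} (z − λ₂) / I_{2k}(z), where I_{2k}(z) = (z − λ₂⁻¹) − λ^{−2k}(z − λ₂). -/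
/-- Let ε ∈ (0, 1/2), a = 1 + ε/2, λ = (2a² − 1) + 2a√(a² − 1), λ₂ = −λ,
and let ψ(z) = −1/z − 2(2a² − 1). Then the half-plane H = {z ∈ ℂ : Re z ≤ −1} satisfies
ψ(H) ⊆ H, and for every z ∈ H and every integer k ≥ 0 one has I_{2k}(z) ≠ 0 and
ψ^k(z) = λ₂ + (λ₂² − 1) λ₂^{−2k−1} (z − λ₂) / I_{2k}(z),
where I_{2k}(z) = (z − λ₂⁻¹) − λ^{−2k}(z − λ₂). -/
theorem stmt5 (ε : ℝ) (hε : ε ∈ Set.Ioo (0 : ℝ) (1/2))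
    (a lam l₂ : ℝ)
    (ha : a = 1 + ε/2)
    (hlam : lam = (2*a^2 - 1) + 2*a*Real.sqrt (a^2 - 1))
    (hl₂ : l₂ = -lam)
    (ψ : ℂ → ℂ) (hψ : ∀ z : ℂ, ψ z = -1/z - 2*(2*(a : ℂ)^2 - 1)) :
    Set.MapsTo ψ {z : ℂ | z.re ≤ -1} {z : ℂ | z.re ≤ -1} ∧
    ∀ z : ℂ, z.re ≤ -1 → ∀ k : ℕ,
      (z - ((l₂⁻¹ : ℝ) : ℂ)) - ((lam⁻¹^(2*k) : ℝ) : ℂ) * (z - (l₂ : ℂ)) ≠ 0 ∧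
      ψ^[k] z = (l₂ : ℂ) + ((l₂ : ℂ)^2 - 1) * (l₂ : ℂ)^(-(2*(k : ℤ)) - 1) * (z - (l₂ : ℂ)) /
        ((z - ((l₂⁻¹ : ℝ) : ℂ)) - ((lam⁻¹^(2*k) : ℝ) : ℂ) * (z - (l₂ : ℂ))) := by
  obtain ⟨hε0, hε1⟩ := hε
  have ha1 : 1 < a := by rw [ha]; linarith
  have hsqnn : 0 ≤ Real.sqrt (a^2 - 1) := Real.sqrt_nonneg _
  have hsq : Real.sqrt (a^2 - 1) ^ 2 = a^2 - 1 := Real.sq_sqrt (by nlinarith)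
  have hlam1 : 1 < lam := by rw [hlam]; nlinarith
  have hlam0 : 0 < lam := by linarith
  have hkey : lam^2 + 1 = 2*(2*a^2 - 1)*lam := by rw [hlam]; nlinarith [hsq]
  have hmaps : Set.MapsTo ψ {z : ℂ | z.re ≤ -1} {z : ℂ | z.re ≤ -1} := by
    intro z hz
    simp only [Set.mem_setOf_eq] at hz ⊢
    have hz0 : z ≠ 0 := by
      intro h; rw [h] at hz; simp at hz; linarith
    have hns : 0 < Complex.normSq z := Complex.normSq_pos.2 hz0
    have hcast : (2*(2*(a:ℂ)^2 - 1)) = ((2*(2*a^2 - 1) : ℝ) : ℂ) := by push_cast; ring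
    rw [hψ, hcast]
    have hre : (-1/z - ((2*(2*a^2 - 1) : ℝ) : ℂ)).re
        = -z.re / Complex.normSq z - 2*(2*a^2 - 1) := by
      rw [Complex.sub_re, Complex.ofReal_re, neg_div, neg_div, Complex.neg_re,
        Complex.div_re]
      simp [Complex.normSq_apply]
    rw [hre]
    have h1 : -z.re / Complex.normSq z ≤ 1 := by
      rw [div_le_one hns, Complex.normSq_apply]
      nlinarith [sq_nonneg z.im]
    nlinarith
  refine ⟨hmaps, ?_⟩
  intro z hz
  have hmem : ∀ k : ℕ, (ψ^[k] z).re ≤ -1 := fun k => hmaps.iterate k hz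
  have hIre : ∀ m : ℕ,
      ((z - ((l₂⁻¹ : ℝ) : ℂ)) - ((lam⁻¹^(2*m) : ℝ) : ℂ) * (z - (l₂ : ℂ))).re < 0 := by
    intro m
    have hu0 : 0 < lam⁻¹^(2*m) := pow_pos (inv_pos.2 hlam0) _
    have hinv1 : lam⁻¹ < 1 := by
      rw [inv_lt_one_iff₀]; right; exact hlam1
    have hu1 : lam⁻¹^(2*m) ≤ 1 :=
      pow_le_one₀ (le_of_lt (inv_pos.2 hlam0)) (le_of_lt hinv1)
    have hll : lam * lam⁻¹ = 1 := mul_inv_cancel₀ (ne_of_gt hlam0)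
    simp only [Complex.sub_re, Complex.mul_re, Complex.ofReal_re, Complex.ofReal_im,
      Complex.sub_im, zero_mul, sub_zero]
    rw [hl₂, inv_neg]
    nlinarith [hll, mul_nonneg (sub_nonneg.2 hu1) (by linarith : (0:ℝ) ≤ -1 - z.re),
      mul_pos hu0 (by linarith : (0:ℝ) < lam - 1)]
  have hIne : ∀ m : ℕ,
      (z - ((l₂⁻¹ : ℝ) : ℂ)) - ((lam⁻¹^(2*m) : ℝ) : ℂ) * (z - (l₂ : ℂ)) ≠ 0 := by
    intro m h
    have := hIre m
    rw [h] at this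
    simp at this
  set Λ : ℂ := ((lam : ℝ) : ℂ) with hΛdef
  have hΛ0 : Λ ≠ 0 := by
    simp only [hΛdef, Complex.ofReal_ne_zero]
    exact ne_of_gt hlam0
  have hkeyC : Λ^2 + 1 = 2*(2*(a:ℂ)^2 - 1)*Λ := by
    have := congrArg (fun x : ℝ => (x : ℂ)) hkey
    push_cast at this
    convert this using 2
  have hl₂C : ((l₂ : ℝ) : ℂ) = -Λ := by rw [hl₂]; push_cast; ring
  have hl₂inv : ((l₂⁻¹ : ℝ) : ℂ) = -Λ⁻¹ := by rw [hl₂]; push_cast; ring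
  have hucast : ∀ m : ℕ, ((lam⁻¹^(2*m) : ℝ) : ℂ) = Λ⁻¹^(2*m) := by
    intro m; push_cast; ring
  have hzpow : ∀ m : ℕ, ((l₂ : ℝ) : ℂ)^(-(2*((m:ℕ) : ℤ)) - 1) = -(Λ⁻¹^(2*m) * Λ⁻¹) := by
    intro m
    rw [hl₂C]
    have h1 : (-(2*((m:ℕ) : ℤ)) - 1) = -((2*m + 1 : ℕ) : ℤ) := by push_cast; ring
    rw [h1, zpow_neg, zpow_natCast, Odd.neg_pow ⟨m, by ring⟩, inv_neg, pow_succ,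
      mul_inv, inv_pow]
  -- J m = Λ^(2m+1) · I m
  have hJI : ∀ m : ℕ, Λ^(2*m) * (Λ*z + 1) - Λ*(z + Λ)
      = Λ^(2*m+1) * ((z - -Λ⁻¹) - Λ⁻¹^(2*m) * (z - -Λ)) := by
    intro m
    field_simp
    have hc' : Λ^(2*m) * Λ⁻¹^(2*m) = 1 := by rw [← mul_pow, mul_inv_cancel₀ hΛ0, one_pow]
    linear_combination (Λ^2*z + Λ^3) * hc'
  have hJne : ∀ m : ℕ, Λ^(2*m) * (Λ*z + 1) - Λ*(z + Λ) ≠ 0 := by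
    intro m
    rw [hJI m]
    have h := hIne m
    rw [hl₂inv, hucast m, hl₂C] at h
    exact mul_ne_zero (pow_ne_zero _ hΛ0) h
  -- cleared recurrence
  have hB : ∀ m : ℕ, ψ^[m] z * (Λ^(2*m) * (Λ*z + 1) - Λ*(z + Λ))
      = -Λ * (Λ^(2*m) * (Λ*z + 1) - Λ*(z + Λ)) - (Λ^2 - 1)*(z + Λ) := by
    intro m
    induction m with
    | zero =>
      simp only [Function.iterate_zero_apply]
      ring
    | succ m ih =>
      have hw0 : ψ^[m] z ≠ 0 := by
        intro h
        have := hmem m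
        rw [h] at this
        simp at this
        linarith
      rw [Function.iterate_succ_apply']
      have hmul : ψ (ψ^[m] z) * (ψ^[m] z)
          = -1 - 2*(2*(a:ℂ)^2 - 1) * (ψ^[m] z) := by
        rw [hψ]
        field_simp
      apply mul_right_cancel₀ (mul_ne_zero hw0 (hJne m))
      calc ψ (ψ^[m] z) * (Λ^(2*(m+1)) * (Λ*z + 1) - Λ*(z + Λ)) * (ψ^[m] z *
              (Λ^(2*m) * (Λ*z + 1) - Λ*(z + Λ)))
          = (ψ (ψ^[m] z) * (ψ^[m] z)) * ((Λ^(2*(m+1)) * (Λ*z + 1) - Λ*(z + Λ)) *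
              (Λ^(2*m) * (Λ*z + 1) - Λ*(z + Λ))) := by ring
        _ = (-1 - 2*(2*(a:ℂ)^2 - 1) * (ψ^[m] z)) * ((Λ^(2*(m+1)) * (Λ*z + 1) - Λ*(z + Λ)) *
              (Λ^(2*m) * (Λ*z + 1) - Λ*(z + Λ))) := by rw [hmul]
        _ = (-Λ * (Λ^(2*(m+1)) * (Λ*z + 1) - Λ*(z + Λ)) - (Λ^2 - 1)*(z + Λ)) * (ψ^[m] z *
              (Λ^(2*m) * (Λ*z + 1) - Λ*(z + Λ))) := by
            linear_combination
              (-(2*(2*(a:ℂ)^2 - 1)) * (Λ^(2*(m+1)) * (Λ*z + 1) - Λ*(z + Λ))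
                + Λ * (Λ^(2*(m+1)) * (Λ*z + 1) - Λ*(z + Λ)) + (Λ^2 - 1)*(z + Λ)) * ih
              + (-(Λ^2 + 2*z*Λ + z^2) + 2*Λ^(2*m)*Λ^2 + 2*Λ^(2*m)*z*Λ + 2*Λ^(2*m)*z*Λ^3
                + 2*Λ^(2*m)*z^2*Λ^2 - (Λ^(2*m))^2*Λ^2 - 2*(Λ^(2*m))^2*z*Λ^3
                - (Λ^(2*m))^2*z^2*Λ^4) * hkeyC
  intro k
  refine ⟨hIne k, ?_⟩
  have hIk := hIne k
  rw [hl₂inv, hucast k, hl₂C] at hIk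
  rw [hzpow k, hl₂C, hl₂inv, hucast k]
  have hIJ : (z - -Λ⁻¹) - Λ⁻¹^(2*k) * (z - -Λ)
      = (Λ^(2*k+1))⁻¹ * (Λ^(2*k) * (Λ*z + 1) - Λ*(z + Λ)) := by
    rw [hJI k, inv_mul_cancel_left₀ (pow_ne_zero _ hΛ0)]
  have hval : ψ^[k] z = (-Λ * (Λ^(2*k) * (Λ*z + 1) - Λ*(z + Λ)) - (Λ^2 - 1)*(z + Λ))
      / (Λ^(2*k) * (Λ*z + 1) - Λ*(z + Λ)) := (eq_div_iff (hJne k)).2 (hB k)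
  rw [hval, hIJ]
  have hc : Λ⁻¹^(2*k) * Λ^(2*k) = 1 := by
    rw [inv_pow, inv_mul_cancel₀ (pow_ne_zero _ hΛ0)]
  field_simp [hJne k]
  linear_combination (Λ^3*z + Λ^4 - Λ*z - Λ^2) * hc
end

section
/- Let ε ∈ (0, 1/2), a = 1 + ε/2, λ = (2a² − 1) + 2a√(a² − 1), λ₂ = −λ, and ψ(z) = −1/z − 2(2a² − 1). Then for every integer k ≥ 0, every integer α ≥ 1, and every z ∈ ℂ with Re z < −1, the α-th complex derivative of the k-th iterate ψ^k at z equals (λ₂ − λ₂⁻¹)² λ₂^{−2k} (−1)^{α−1} α! (1 − λ₂^{−2k})^{α−1} I_{2k}(z)^{−(α+1)}, where I_{2k}(z) = (z − λ₂⁻¹) − λ^{−2k}(z − λ₂). -/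
open Complex Filter Topology

namespace Stmt6Aux


noncomputable def Ik (lam : ℝ) (k : ℕ) (z : ℂ) : ℂ :=
  (z + ((lam⁻¹ : ℝ) : ℂ)) - ((lam⁻¹ : ℝ) : ℂ) ^ (2 * k) * (z + (lam : ℂ))

lemma Ik_re_neg {lam : ℝ} (h1 : 1 < lam) (k : ℕ) {z : ℂ} (hz : z.re < -1) :
    (Ik lam k z).re < 0 := by
  have h0 : (0:ℝ) < lam := lt_trans one_pos h1
  have ht0 : 0 < lam⁻¹ := by positivity
  have ht1 : lam⁻¹ < 1 := by
    rw [inv_lt_one_iff₀]; right; exact h1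
  have hT0 : 0 < lam⁻¹ ^ (2*k) := by positivity
  have hT1 : lam⁻¹ ^ (2*k) ≤ 1 := pow_le_one₀ (le_of_lt ht0) (le_of_lt ht1)
  have hre : (Ik lam k z).re = z.re + lam⁻¹ - lam⁻¹ ^ (2*k) * (z.re + lam) := by
    simp [Ik, ← Complex.ofReal_pow]
  rw [hre]
  nlinarith [mul_nonneg (sub_nonneg.2 hT1) (by linarith : (0:ℝ) ≤ -1 - z.re),
    mul_pos hT0 (by linarith : (0:ℝ) < lam - 1)]

lemma Ik_ne_zero {lam : ℝ} (h1 : 1 < lam) (k : ℕ) {z : ℂ} (hz : z.re < -1) :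
    Ik lam k z ≠ 0 := by
  intro h
  have := Ik_re_neg h1 k hz
  rw [h] at this
  simp at this

lemma ne_zero_of_re {z : ℂ} (hz : z.re < -1) : z ≠ 0 := by
  intro h; rw [h] at hz; simp at hz; linarith

lemma two_lt {lam : ℝ} (h1 : 1 < lam) : 2 < lam + lam⁻¹ := by
  have h0 : (0:ℝ) < lam := lt_trans one_pos h1
  have hinv := mul_inv_cancel₀ (ne_of_gt h0)
  nlinarith [sq_nonneg (lam - 1), mul_pos h0 (inv_pos.2 h0)]

lemma psi_re {lam : ℝ} (h1 : 1 < lam) {z : ℂ} (hz : z.re < -1) :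
    (-1/z - ((lam : ℂ) + ((lam⁻¹ : ℝ) : ℂ))).re < -1 := by
  have hz0 : z ≠ 0 := ne_zero_of_re hz
  have hN : 0 < Complex.normSq z := Complex.normSq_pos.2 hz0
  have hsq : z.re ^ 2 ≤ Complex.normSq z := by
    rw [Complex.normSq_apply]; nlinarith [sq_nonneg z.im]
  have hlt : -z.re < Complex.normSq z := by nlinarith
  have h5 : -(z.re / Complex.normSq z) < 1 := by
    rw [← neg_div, div_lt_one hN]; exact hlt
  have h2 := two_lt h1
  have hre : (-1/z - ((lam : ℂ) + ((lam⁻¹ : ℝ) : ℂ))).re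
      = -(z.re / Complex.normSq z) - (lam + lam⁻¹) := by
    rw [show -1/z = -z⁻¹ by ring]
    simp [Complex.sub_re, Complex.neg_re, Complex.inv_re, Complex.add_re]
  rw [hre]; linarith



lemma iterate_eq {lam : ℝ} (h1 : 1 < lam) (ψ : ℂ → ℂ)
    (hψ : ∀ z : ℂ, ψ z = -1/z - ((lam : ℂ) + ((lam⁻¹ : ℝ) : ℂ))) :
    ∀ k : ℕ, ∀ z : ℂ, z.re < -1 →
      ψ^[k] z = -(lam : ℂ) + (((lam⁻¹ : ℝ) : ℂ) - lam) * ((lam⁻¹ : ℝ) : ℂ) ^ (2*k)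
        * (z + lam) / Ik lam k z := by
  have h0 : (0:ℝ) < lam := lt_trans one_pos h1
  have hw : (lam : ℂ) ≠ 0 := by exact_mod_cast ne_of_gt h0
  intro k
  induction k with
  | zero =>
    intro z hz
    have hlam1 : lam ≠ 1 := by linarith
    have hd : ((lam⁻¹ : ℝ) : ℂ) - lam ≠ 0 := by
      intro h
      have : (lam⁻¹ : ℝ) = lam := by exact_mod_cast sub_eq_zero.1 h
      have h2 : lam * lam = 1 := by
        field_simp at this
        nlinarith [this]
      nlinarith
    have h12 : (1:ℂ) - (lam:ℂ)*lam ≠ 0 := by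
      intro h
      have : (1:ℝ) - lam*lam = 0 := by exact_mod_cast h
      nlinarith
    simp only [Function.iterate_zero, id_eq, Ik, Nat.mul_zero, pow_zero, one_mul, mul_one]
    rw [show z + ((lam⁻¹:ℝ):ℂ) - (z + (lam:ℂ)) = ((lam⁻¹:ℝ):ℂ) - (lam:ℂ) by ring,
      mul_comm, mul_div_assoc, div_self hd, mul_one]
    ring
  | succ k ih =>
    intro z hz
    have hz' : (ψ z).re < -1 := by rw [hψ]; exact psi_re h1 hz
    have hz0 : z ≠ 0 := ne_zero_of_re hz
    have hD1 : Ik lam k (ψ z) ≠ 0 := Ik_ne_zero h1 k hz'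
    have hD2 : Ik lam (k+1) z ≠ 0 := Ik_ne_zero h1 (k+1) hz
    set w : ℂ := (lam : ℂ) with hwdef
    have hE : Ik lam k (ψ z)
        = -(((1 + w*z) - (w⁻¹)^(2*k) * (1 + w⁻¹*z))) / z := by
      rw [hψ]
      simp only [Ik, Complex.ofReal_inv, ← hwdef]
      field_simp
      ring
    have hEne : ((1 + w*z) - (w⁻¹)^(2*k) * (1 + w⁻¹*z)) ≠ 0 := by
      intro h
      apply hD1
      rw [hE, h]
      simp
    have hIk1 : Ik lam (k+1) z = w⁻¹ * ((1 + w*z) - (w⁻¹)^(2*k) * (1 + w⁻¹*z)) := by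
      simp only [Ik, Complex.ofReal_inv, ← hwdef]
      linear_combination (-(z + w⁻¹^(2*k) * w⁻¹)) * (mul_inv_cancel₀ hw)
    have hA1 : ψ z + w = -(1 + w⁻¹*z)/z := by
      rw [hψ]
      simp only [Complex.ofReal_inv, ← hwdef]
      field_simp
      ring
    rw [Function.iterate_succ_apply, ih (ψ z) hz', hE, hA1, hIk1]
    simp only [Complex.ofReal_inv, ← hwdef]
    rw [add_right_inj]
    rw [div_eq_div_iff (by
        simp only [neg_div]
        exact neg_ne_zero.2 (div_ne_zero hEne hz0))
      (mul_ne_zero (inv_ne_zero hw) hEne)]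
    linear_combination (w⁻¹ - w) * w⁻¹^(2*k) * (1 + w*z - w⁻¹^(2*k) * (1 + w⁻¹*z)) * z⁻¹ * w⁻¹ * (mul_inv_cancel₀ hw)



lemma hasDerivAt_Ik (lam : ℝ) (k : ℕ) (z : ℂ) :
    HasDerivAt (Ik lam k) (1 - ((lam⁻¹:ℝ):ℂ)^(2*k)) z := by
  show HasDerivAt (fun w => (w + ((lam⁻¹:ℝ):ℂ)) - ((lam⁻¹:ℝ):ℂ)^(2*k) * (w + ((lam:ℝ):ℂ)))
    (1 - ((lam⁻¹:ℝ):ℂ)^(2*k)) z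
  have := ((hasDerivAt_id z).add_const ((lam⁻¹:ℝ):ℂ)).sub
    (((hasDerivAt_id z).add_const ((lam:ℝ):ℂ)).const_mul (((lam⁻¹:ℝ):ℂ)^(2*k)))
  exact this.congr_deriv (by simp)

lemma hasDerivAt_F {lam : ℝ} (h1 : 1 < lam) (k : ℕ) {z : ℂ} (hz : z.re < -1) :
    HasDerivAt (fun w => -(lam:ℂ) + (((lam⁻¹:ℝ):ℂ) - lam) * ((lam⁻¹:ℝ):ℂ)^(2*k)
        * (w + lam) / Ik lam k w)
      ((((lam⁻¹:ℝ):ℂ) - lam)^2 * ((lam⁻¹:ℝ):ℂ)^(2*k) * (Ik lam k z)^(-(2:ℤ))) z := by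
  have hne := Ik_ne_zero h1 k hz
  have hN : HasDerivAt (fun w : ℂ => (((lam⁻¹:ℝ):ℂ) - lam) * ((lam⁻¹:ℝ):ℂ)^(2*k) * (w + lam))
      ((((lam⁻¹:ℝ):ℂ) - lam) * ((lam⁻¹:ℝ):ℂ)^(2*k)) z := by
    simpa using ((hasDerivAt_id z).add_const ((lam:ℝ):ℂ)).const_mul
      ((((lam⁻¹:ℝ):ℂ) - lam) * ((lam⁻¹:ℝ):ℂ)^(2*k))
  have hI : HasDerivAt (Ik lam k) (1 - ((lam⁻¹:ℝ):ℂ)^(2*k)) z := hasDerivAt_Ik lam k z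
  have h := (hN.div hI hne).const_add (-(lam:ℂ))
  refine h.congr_deriv ?_
  have key : (((lam⁻¹:ℝ):ℂ) - lam) * ((lam⁻¹:ℝ):ℂ)^(2*k) * Ik lam k z -
      (((lam⁻¹:ℝ):ℂ) - lam) * ((lam⁻¹:ℝ):ℂ)^(2*k) * (z + lam) * (1 - ((lam⁻¹:ℝ):ℂ)^(2*k))
      = (((lam⁻¹:ℝ):ℂ) - lam)^2 * ((lam⁻¹:ℝ):ℂ)^(2*k) := by
    simp only [Ik]; ring
  rw [key]
  have hz2 : (Ik lam k z)^(-(2:ℤ)) = ((Ik lam k z)^(2:ℕ))⁻¹ := by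
    rw [show (-(2:ℤ)) = -((2:ℕ):ℤ) by norm_num, zpow_neg, zpow_natCast]
  rw [hz2, div_eq_mul_inv]

lemma mainAux {lam : ℝ} (h1 : 1 < lam) (ψ : ℂ → ℂ)
    (hψ : ∀ z : ℂ, ψ z = -1/z - ((lam : ℂ) + ((lam⁻¹ : ℝ) : ℂ))) :
    ∀ k α : ℕ, 1 ≤ α → ∀ z : ℂ, z.re < -1 →
      iteratedDeriv α (ψ^[k]) z =
        (((lam⁻¹:ℝ):ℂ) - lam)^2 * ((lam⁻¹:ℝ):ℂ)^(2*k) * (-1)^(α-1) * (α.factorial : ℂ) *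
          (1 - ((lam⁻¹:ℝ):ℂ)^(2*k))^(α-1) * (Ik lam k z)^(-((α:ℤ)+1)) := by
  intro k α hα
  have hU : IsOpen {z : ℂ | z.re < -1} :=
    IsOpen.preimage Complex.continuous_re isOpen_Iio
  induction α, hα using Nat.le_induction with
  | base =>
    intro z hz
    have heq : ψ^[k] =ᶠ[𝓝 z] (fun w => -(lam:ℂ) + (((lam⁻¹:ℝ):ℂ) - lam) * ((lam⁻¹:ℝ):ℂ)^(2*k)
        * (w + lam) / Ik lam k w) :=
      eventually_of_mem (hU.mem_nhds hz) (fun w hw => iterate_eq h1 ψ hψ k w hw)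
    rw [iteratedDeriv_one, heq.deriv_eq, (hasDerivAt_F h1 k hz).deriv]
    norm_num [Nat.factorial]
  | succ n hn ih =>
    intro z hz
    rw [iteratedDeriv_succ]
    have heq : iteratedDeriv n (ψ^[k]) =ᶠ[𝓝 z]
        (fun w => (((lam⁻¹:ℝ):ℂ) - lam)^2 * ((lam⁻¹:ℝ):ℂ)^(2*k) * (-1)^(n-1) * (n.factorial : ℂ) *
          (1 - ((lam⁻¹:ℝ):ℂ)^(2*k))^(n-1) * (Ik lam k w)^(-((n:ℤ)+1))) :=
      eventually_of_mem (hU.mem_nhds hz) (fun w hw => ih w hw)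
    rw [heq.deriv_eq]
    have hne := Ik_ne_zero h1 k hz
    have hI : HasDerivAt (Ik lam k) (1 - ((lam⁻¹:ℝ):ℂ)^(2*k)) z := hasDerivAt_Ik lam k z
    have h2 : HasDerivAt (fun w => (Ik lam k w)^(-((n:ℤ)+1)))
        ((((-((n:ℤ)+1)) : ℤ) : ℂ) * (Ik lam k z)^(-((n:ℤ)+1)-1) * (1 - ((lam⁻¹:ℝ):ℂ)^(2*k))) z := by
      have := (hasDerivAt_zpow (-((n:ℤ)+1)) (Ik lam k z) (Or.inl hne)).comp z hI
      exact this.congr_deriv (by ring)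
    have h3 := h2.const_mul
      ((((lam⁻¹:ℝ):ℂ) - lam)^2 * ((lam⁻¹:ℝ):ℂ)^(2*k) * (-1)^(n-1) * (n.factorial : ℂ) *
        (1 - ((lam⁻¹:ℝ):ℂ)^(2*k))^(n-1))
    rw [h3.deriv]
    obtain ⟨m, rfl⟩ : ∃ m, n = m + 1 := ⟨n-1, (Nat.succ_pred_eq_of_pos hn).symm⟩
    rw [show (-((((m+1):ℕ):ℤ)+1) - 1) = -(((m+1+1 : ℕ):ℤ)+1) by push_cast; ring]
    simp only [Nat.add_sub_cancel, Nat.factorial_succ]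
    push_cast
    ring

end Stmt6Aux

/-- Let ε ∈ (0, 1/2), a = 1 + ε/2, λ = (2a² − 1) + 2a√(a² − 1), λ₂ = −λ,
and ψ(z) = −1/z − 2(2a² − 1). Then for every integer k ≥ 0, every integer α ≥ 1, and
every z ∈ ℂ with Re z < −1, the α-th complex derivative of the k-th iterate ψ^k at z
equals (λ₂ − λ₂⁻¹)² λ₂^{−2k} (−1)^{α−1} α! (1 − λ₂^{−2k})^{α−1} I_{2k}(z)^{−(α+1)},
where I_{2k}(z) = (z − λ₂⁻¹) − λ^{−2k}(z − λ₂). -/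
theorem stmt6 (ε : ℝ) (hε : ε ∈ Set.Ioo (0 : ℝ) (1/2))
    (a lam l₂ : ℝ)
    (ha : a = 1 + ε/2)
    (hlam : lam = (2*a^2 - 1) + 2*a*Real.sqrt (a^2 - 1))
    (hl₂ : l₂ = -lam)
    (ψ : ℂ → ℂ) (hψ : ∀ z : ℂ, ψ z = -1/z - 2*(2*(a : ℂ)^2 - 1)) :
    ∀ k : ℕ, ∀ α : ℕ, 1 ≤ α → ∀ z : ℂ, z.re < -1 →
      iteratedDeriv α (ψ^[k]) z =
        ((l₂ : ℂ) - ((l₂⁻¹ : ℝ) : ℂ))^2 * (l₂ : ℂ)^(-(2*(k : ℤ))) * (-1)^(α - 1) *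
          (Nat.factorial α : ℂ) * (1 - (l₂ : ℂ)^(-(2*(k : ℤ))))^(α - 1) *
          ((z - ((l₂⁻¹ : ℝ) : ℂ)) - ((lam⁻¹^(2*k) : ℝ) : ℂ) * (z - (l₂ : ℂ)))^(-((α : ℤ) + 1)) := by
  obtain ⟨hε0, hε1⟩ := hε
  have ha1 : 1 < a := by rw [ha]; linarith
  have has : 0 ≤ a^2 - 1 := by nlinarith
  have hs : Real.sqrt (a^2 - 1) ^ 2 = a^2 - 1 := Real.sq_sqrt has
  have hsnn : 0 ≤ Real.sqrt (a^2 - 1) := Real.sqrt_nonneg _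
  have h1 : 1 < lam := by
    rw [hlam]
    nlinarith [mul_nonneg (by linarith : (0:ℝ) ≤ a) hsnn]
  have h0 : (0:ℝ) < lam := lt_trans one_pos h1
  have hne : lam ≠ 0 := ne_of_gt h0
  have key : lam^2 - 2*(2*a^2-1)*lam + 1 = 0 := by
    rw [hlam]; linear_combination (4*a^2) * hs
  have h2c : 2*(2*a^2 - 1) = lam + lam⁻¹ := by
    field_simp
    linear_combination -key
  have hψ' : ∀ z : ℂ, ψ z = -1/z - ((lam : ℂ) + ((lam⁻¹ : ℝ) : ℂ)) := by
    intro z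
    rw [hψ z]
    have hc : (2:ℂ)*(2*(a:ℂ)^2 - 1) = (lam : ℂ) + ((lam⁻¹ : ℝ) : ℂ) := by
      exact_mod_cast congrArg (fun x : ℝ => (x : ℂ)) h2c
    rw [hc]
  intro k α hα z hz
  rw [Stmt6Aux.mainAux h1 ψ hψ' k α hα z hz]
  have e1 : (l₂ : ℂ) = -(lam : ℂ) := by rw [hl₂]; push_cast; ring
  have e2 : ((l₂⁻¹ : ℝ) : ℂ) = -((lam⁻¹ : ℝ) : ℂ) := by rw [hl₂]; push_cast; ring
  have e4 : ((lam⁻¹^(2*k) : ℝ) : ℂ) = ((lam⁻¹:ℝ):ℂ)^(2*k) := by push_cast; ring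
  have e5 : (z - ((l₂⁻¹ : ℝ) : ℂ)) - ((lam⁻¹^(2*k) : ℝ) : ℂ) * (z - (l₂ : ℂ))
      = Stmt6Aux.Ik lam k z := by
    rw [e1, e2, e4]; simp only [Stmt6Aux.Ik]; ring
  have e3 : (l₂ : ℂ)^(-(2*(k:ℤ))) = ((lam⁻¹:ℝ):ℂ)^(2*k) := by
    rw [e1, show (-(2*(k:ℤ))) = -((2*k:ℕ):ℤ) by push_cast; ring, zpow_neg, zpow_natCast,
      Even.neg_pow (even_two_mul k), Complex.ofReal_inv, inv_pow]
  rw [e5, e3, e1, e2]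
  ring
end

section
/- For every integer β ≥ 1 there exists a constant C > 0, depending only on β, such that the following holds. Let ε ∈ (0, 1/2), a = 1 + ε/2, λ = (2a² − 1) + 2a√(a² − 1), λ₂ = −λ, and let z ∈ D = {w ∈ ℂ : |w − (1 − 4a²)| ≤ 2a} with r = |z − λ₂|. Define Ψ_z : ℝ → ℂ by Ψ_z(t) = λ₂ + (λ₂² − 1) λ₂^{−1} λ^{−2t} (z − λ₂) / I_{2t}(z), where I_{2t}(z) = (z − λ₂⁻¹) − λ^{−2t}(z − λ₂) (this interpolates the iterates: Ψ_z(k) = ψ^k(z) for integer k). Then for every real t ≥ 1, |Ψ_z^{(β)}(t)| ≤ C ε^{(1+β)/2} λ^{−2t} Σ_{j=0}^{β} r^{j+1} / |I_{2t}(z)|^{j+1}. -/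
def Ncoef : ℕ → ℕ → ℕ
  | 0, 0 => 1
  | 0, _+1 => 0
  | n+1, j => j * Ncoef n j + j * Ncoef n (j-1)

lemma Ncoef_succ (n j : ℕ) : Ncoef (n+1) j = j * Ncoef n j + j * Ncoef n (j-1) := rfl

lemma Ncoef_zero_of_lt : ∀ n j, n < j → Ncoef n j = 0
  | 0, _+1, _ => rfl
  | n+1, j, h => by
    have h1 : Ncoef n j = 0 := Ncoef_zero_of_lt n j (by omega)
    have h2 : Ncoef n (j-1) = 0 := Ncoef_zero_of_lt n (j-1) (by omega)
    simp [Ncoef_succ, h1, h2]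

lemma sum_step (n : ℕ) (T : ℕ → ℂ) :
    ∑ j ∈ Finset.range (n+2), (Ncoef (n+1) j : ℂ) * T j
      = ∑ j ∈ Finset.range (n+1), (Ncoef n j : ℂ) * ((j:ℂ) * T j + ((j:ℂ)+1) * T (j+1)) := by
  have h : ∀ j, (Ncoef (n+1) j : ℂ) * T j
      = (j:ℂ) * (Ncoef n j : ℂ) * T j + (j:ℂ) * (Ncoef n (j-1) : ℂ) * T j := by
    intro j; rw [Ncoef_succ]; push_cast; ring
  rw [Finset.sum_congr rfl fun j _ => h j, Finset.sum_add_distrib]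
  have e1 : ∑ j ∈ Finset.range (n+2), (j:ℂ) * (Ncoef n j : ℂ) * T j
      = ∑ j ∈ Finset.range (n+1), (j:ℂ) * (Ncoef n j : ℂ) * T j := by
    rw [Finset.sum_range_succ, Ncoef_zero_of_lt n (n+1) (by omega)]
    simp
  have e2 : ∑ j ∈ Finset.range (n+2), (j:ℂ) * (Ncoef n (j-1) : ℂ) * T j
      = ∑ i ∈ Finset.range (n+1), ((i:ℂ)+1) * (Ncoef n i : ℂ) * T (i+1) := by
    rw [Finset.sum_range_succ']
    simp only [Nat.add_sub_cancel, Nat.cast_zero, zero_mul, add_zero, Nat.cast_add, Nat.cast_one]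
  rw [e1, e2, ← Finset.sum_add_distrib]
  exact Finset.sum_congr rfl fun j _ => by ring


section
variable (c : ℝ) (A : ℂ) (U Ifn : ℝ → ℂ)

lemma termDeriv (hU : ∀ s, HasDerivAt U (-(c:ℂ) * U s) s)
    (hIdef : ∀ s, Ifn s = A - U s)
    (t : ℝ) (hIt : Ifn t ≠ 0) (j : ℕ) :
    HasDerivAt (fun s => U s ^ j * ((Ifn s) ^ (j+1))⁻¹)
      (-(c:ℂ) * ((j:ℂ) * (U t ^ j * ((Ifn t) ^ (j+1))⁻¹)
        + ((j:ℂ)+1) * (U t ^ (j+1) * ((Ifn t) ^ (j+2))⁻¹))) t := by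
  have hIfun : Ifn = fun s => A - U s := funext hIdef
  have hI' : HasDerivAt Ifn ((c:ℂ) * U t) t := by
    rw [hIfun]
    simpa using (hU t).const_sub A
  have hUp : HasDerivAt (fun s => U s ^ j) ((j:ℂ) * U t ^ (j-1) * (-(c:ℂ) * U t)) t :=
    (hasDerivAt_pow j (U t)).comp t (hU t)
  have hIp : HasDerivAt (fun s => Ifn s ^ (j+1))
      (((j:ℕ)+1 : ℂ) * Ifn t ^ j * ((c:ℂ) * U t)) t := by
    simpa [Function.comp_def] using (hasDerivAt_pow (j+1) (Ifn t)).comp t hI'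
  have hIinv : HasDerivAt (fun s => ((Ifn s) ^ (j+1))⁻¹)
      (-((Ifn t ^ (j+1)) ^ 2)⁻¹ * ((((j:ℕ)+1 : ℂ)) * Ifn t ^ j * ((c:ℂ) * U t))) t :=
    (hasDerivAt_inv (pow_ne_zero _ hIt)).comp t hIp
  have h := hUp.fun_mul hIinv
  convert h using 1
  rotate_left
  rcases j with _ | k
  · simp
    ring
  · have hIt2 : Ifn t ^ (k+2) ≠ 0 := pow_ne_zero _ hIt
    have hIt3 : Ifn t ^ (k+3) ≠ 0 := pow_ne_zero _ hIt
    push_cast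
    field_simp
    ring
  rfl
noncomputable def SumF (n : ℕ) (t : ℝ) : ℂ :=
  ∑ j ∈ Finset.range (n+1), (Ncoef n j : ℂ) * (U t ^ j * ((Ifn t) ^ (j+1))⁻¹)

lemma sumFDeriv (hU : ∀ s, HasDerivAt U (-(c:ℂ) * U s) s)
    (hIdef : ∀ s, Ifn s = A - U s)
    (n : ℕ) (t : ℝ) (hIt : Ifn t ≠ 0) :
    HasDerivAt (SumF U Ifn n) (-(c:ℂ) * SumF U Ifn (n+1) t) t := by
  have h := HasDerivAt.fun_sum (fun j (_ : j ∈ Finset.range (n+1)) =>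
    (termDeriv c A U Ifn hU hIdef t hIt j).const_mul ((Ncoef n j : ℂ)))
  convert h using 1
  show -(c:ℂ) * SumF U Ifn (n+1) t = _
  unfold SumF
  rw [show n + 1 + 1 = n + 2 from rfl, sum_step n, Finset.mul_sum]
  exact Finset.sum_congr rfl fun j _ => by ring
  rfl
  rfl

lemma key (K C₀ : ℂ) (Φ : ℝ → ℂ)
    (hU : ∀ s, HasDerivAt U (-(c:ℂ) * U s) s)
    (hIdef : ∀ s, Ifn s = A - U s)
    (hI : ∀ s, 0 < s → Ifn s ≠ 0)
    (hΦ : ∀ s, 0 < s → Φ s = C₀ + (K*A) * (Ifn s)⁻¹) :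
    ∀ n, ∀ t, 0 < t → iteratedDeriv (n+1) Φ t
      = (K*A) * (-(c:ℂ))^(n+1) * SumF U Ifn (n+1) t := by
  intro n
  induction n with
  | zero =>
    intro t ht
    rw [iteratedDeriv_one]
    have hev : Φ =ᶠ[nhds t] (fun s => C₀ + (K*A) * SumF U Ifn 0 s) := by
      filter_upwards [Ioi_mem_nhds ht] with s hs
      rw [hΦ s hs]
      unfold SumF
      simp [Ncoef]
    rw [hev.deriv_eq]
    have hd : HasDerivAt (fun s => C₀ + (K*A) * SumF U Ifn 0 s)
        ((K*A) * (-(c:ℂ) * SumF U Ifn 1 t)) t :=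
      ((sumFDeriv c A U Ifn hU hIdef 0 t (hI t ht)).const_mul (K*A)).const_add C₀
    rw [hd.deriv]
    ring
  | succ n ih =>
    intro t ht
    rw [iteratedDeriv_succ]
    have hev : iteratedDeriv (n+1) Φ =ᶠ[nhds t]
        (fun s => (K*A) * (-(c:ℂ))^(n+1) * SumF U Ifn (n+1) s) := by
      filter_upwards [Ioi_mem_nhds ht] with s hs
      exact ih s hs
    rw [hev.deriv_eq]
    have hd : HasDerivAt (fun s => (K*A) * (-(c:ℂ))^(n+1) * SumF U Ifn (n+1) s)
        ((K*A) * (-(c:ℂ))^(n+1) * (-(c:ℂ) * SumF U Ifn (n+2) t)) t :=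
      (sumFDeriv c A U Ifn hU hIdef (n+1) t (hI t ht)).const_mul _
    rw [hd.deriv]
    ring
end

set_option maxHeartbeats 1000000 in
/-- For every integer β ≥ 1 there exists a constant C > 0, depending only
on β, such that: for ε ∈ (0, 1/2), a = 1 + ε/2, λ = (2a² − 1) + 2a√(a² − 1), λ₂ = −λ,
z ∈ D = {w : |w − (1 − 4a²)| ≤ 2a} with r = |z − λ₂|, and Ψ_z(t) =
λ₂ + (λ₂² − 1) λ₂^{−1} λ^{−2t} (z − λ₂) / I_{2t}(z), where
I_{2t}(z) = (z − λ₂⁻¹) − λ^{−2t}(z − λ₂), one has for every real t ≥ 1: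
|Ψ_z^{(β)}(t)| ≤ C ε^{(1+β)/2} λ^{−2t} Σ_{j=0}^{β} r^{j+1} / |I_{2t}(z)|^{j+1}. -/
theorem stmt8 (β : ℕ) (hβ : 1 ≤ β) :
    ∃ C : ℝ, 0 < C ∧
      ∀ ε : ℝ, ε ∈ Set.Ioo (0 : ℝ) (1/2) →
        ∀ a lam l₂ : ℝ,
          a = 1 + ε/2 →
          lam = (2*a^2 - 1) + 2*a*Real.sqrt (a^2 - 1) →
          l₂ = -lam →
          ∀ z : ℂ, ‖z - (1 - 4*(a : ℂ)^2)‖ ≤ 2*a →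
            ∀ Ψ : ℝ → ℂ,
              (∀ t : ℝ, Ψ t = (l₂ : ℂ) + ((l₂ : ℂ)^2 - 1) * ((l₂ : ℂ))⁻¹ *
                  ((lam ^ (-(2*t)) : ℝ) : ℂ) * (z - (l₂ : ℂ)) /
                  ((z - ((l₂⁻¹ : ℝ) : ℂ)) - ((lam ^ (-(2*t)) : ℝ) : ℂ) * (z - (l₂ : ℂ)))) →
              ∀ t : ℝ, 1 ≤ t →
                ‖iteratedDeriv β Ψ t‖ ≤
                  C * ε ^ ((1 + (β : ℝ))/2) * lam ^ (-(2*t)) *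
                    ∑ j ∈ Finset.range (β + 1),
                      (‖z - (l₂ : ℂ)‖)^(j+1) /
                        (‖(z - ((l₂⁻¹ : ℝ) : ℂ)) -
                          ((lam ^ (-(2*t)) : ℝ) : ℂ) * (z - (l₂ : ℂ))‖)^(j+1) := by
  obtain ⟨n, rfl⟩ : ∃ n, β = n + 1 := ⟨β - 1, by omega⟩
  set M : ℝ := ∑ j ∈ Finset.range (n+2), (Ncoef (n+1) j : ℝ) with hM
  have hM0 : 0 ≤ M := Finset.sum_nonneg fun j _ => by positivity
  refine ⟨240 * 20^(n+1) * (M + 1), by positivity, ?_⟩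
  intro ε hεm a lam l₂ ha hlam hl₂ z hz Ψ hΨ t ht
  obtain ⟨hε0, hε1⟩ := hεm
  have ht0 : (0:ℝ) < t := by linarith
  -- basic numeric facts
  have ha1 : 1 < a := by rw [ha]; linarith
  have hale : a ≤ 5/4 := by rw [ha]; linarith
  have ha2 : 0 < a^2 - 1 := by nlinarith
  have hsnn : 0 ≤ Real.sqrt (a^2 - 1) := Real.sqrt_nonneg _
  have hlam1 : 1 < lam := by rw [hlam]; nlinarith
  have hlam0 : 0 < lam := by linarith
  have hlaminv : lam⁻¹ < 1 := by
    rw [inv_lt_one_iff₀]; right; exact hlam1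
  have hlaminv0 : 0 < lam⁻¹ := by positivity
  -- the cast of l₂⁻¹
  have hl₂inv : l₂⁻¹ = -lam⁻¹ := by rw [hl₂, inv_neg]
  -- definitions
  set r₀ : ℂ := z - (l₂:ℂ) with hr₀
  set A : ℂ := z - ((l₂⁻¹:ℝ):ℂ) with hA
  set U : ℝ → ℂ := fun s => ((lam ^ (-(2*s)) : ℝ) : ℂ) * r₀ with hUdef
  set Ifn : ℝ → ℂ := fun s => A - U s with hIdef
  set c : ℝ := 2 * Real.log lam with hc
  set K : ℂ := ((l₂:ℂ)^2 - 1) * ((l₂:ℂ))⁻¹ with hK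
  have hc0 : 0 ≤ c := by
    rw [hc]; have := Real.log_nonneg hlam1.le; linarith
  -- derivative of U
  have hU : ∀ s, HasDerivAt U (-(c:ℂ) * U s) s := by
    intro s
    have hm : HasDerivAt (fun s : ℝ => lam ^ (-(2*s)) : ℝ → ℝ)
        (-c * lam ^ (-(2*s))) s := by
      have heq : (fun s : ℝ => lam ^ (-(2*s)) : ℝ → ℝ)
          = fun s : ℝ => Real.exp (Real.log lam * (-(2*s))) := by
        funext x; rw [Real.rpow_def_of_pos hlam0]
      rw [heq]
      have hlin : HasDerivAt (fun s : ℝ => Real.log lam * (-(2*s)))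
          (Real.log lam * (-2)) s := by
        simpa using (((hasDerivAt_id s).const_mul (2:ℝ)).neg.const_mul (Real.log lam))
      have := hlin.exp
      convert this using 1
      rw [← Real.rpow_def_of_pos hlam0, hc]; ring
    have h2 := (hm.ofReal_comp).mul_const r₀
    convert h2 using 1
    show -(c:ℂ) * (((lam ^ (-(2*s)) : ℝ):ℂ) * r₀) = _
    push_cast
    ring
    rfl
  -- real part estimates
  have hzre : z.re ≤ 1 - 4*a^2 + 2*a := by
    have h1 : (z - (1 - 4*(a:ℂ)^2)).re ≤ 2*a := le_trans (Complex.re_le_norm _) hz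
    have h2 : (1 - 4*(a:ℂ)^2) = ((1 - 4*a^2 : ℝ):ℂ) := by push_cast; ring
    rw [h2, Complex.sub_re, Complex.ofReal_re] at h1
    linarith
  have hAre : A.re < 0 := by
    rw [hA, Complex.sub_re, Complex.ofReal_re, hl₂inv]
    nlinarith
  have hr₀A : r₀ = A + ((lam - lam⁻¹ : ℝ):ℂ) := by
    rw [hr₀, hA, hl₂]
    push_cast
    ring
  -- nonvanishing of Ifn
  have hmpos : ∀ s : ℝ, 0 < lam ^ (-(2*s)) := fun s => Real.rpow_pos_of_pos hlam0 _
  have hmlt1 : ∀ s : ℝ, 0 < s → lam ^ (-(2*s)) < 1 := fun s hs =>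
    Real.rpow_lt_one_of_one_lt_of_neg hlam1 (by linarith)
  have hIre : ∀ s, 0 < s → (Ifn s).re < 0 := by
    intro s hs
    have h1 : (Ifn s).re = (1 - lam ^ (-(2*s))) * A.re - lam ^ (-(2*s)) * (lam - lam⁻¹) := by
      rw [hIdef]
      simp only [hUdef, hr₀A]
      simp [Complex.sub_re, Complex.mul_re, Complex.add_re, Complex.ofReal_re,
        Complex.ofReal_im, Complex.add_im]
      ring
    rw [h1]
    have h2 := hmpos s
    have h3 := hmlt1 s hs
    nlinarith
  have hI : ∀ s, 0 < s → Ifn s ≠ 0 := by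
    intro s hs h0
    have := hIre s hs
    rw [h0] at this
    simp at this
  -- Ψ in the nice form
  have hΦ : ∀ s, 0 < s → Ψ s = ((l₂:ℂ) - K) + (K*A) * (Ifn s)⁻¹ := by
    intro s hs
    have hne : Ifn s ≠ 0 := hI s hs
    have hUs : U s = A - Ifn s := by rw [hIdef]; ring
    rw [hΨ s]
    have e1 : (l₂:ℂ) + ((l₂ : ℂ)^2 - 1) * ((l₂ : ℂ))⁻¹ *
        ((lam ^ (-(2*s)) : ℝ) : ℂ) * (z - (l₂ : ℂ)) /
        ((z - ((l₂⁻¹ : ℝ) : ℂ)) - ((lam ^ (-(2*s)) : ℝ) : ℂ) * (z - (l₂ : ℂ)))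
        = (l₂:ℂ) + K * U s / Ifn s := by
      rw [hK, hUdef, hIdef, hA, hr₀]
      ring
    rw [e1, hUs]
    field_simp
    ring
  -- the derivative formula
  have hform : iteratedDeriv (n+1) Ψ t = (K*A) * (-(c:ℂ))^(n+1) * SumF U Ifn (n+1) t :=
    key c A U Ifn K ((l₂:ℂ) - K) Ψ hU (fun s => rfl) hI hΦ n t ht0
  -- rewrite goal in terms of Ifn
  have hIt : Ifn t = A - ((lam ^ (-(2*t)) : ℝ):ℂ) * r₀ := rfl
  rw [← hIt]
  have hmt0 : 0 < lam ^ (-(2*t)) := hmpos t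
  have hmt1 : lam ^ (-(2*t)) < 1 := hmlt1 t ht0
  set mt : ℝ := lam ^ (-(2*t)) with hmtdef
  set rr : ℝ := ‖r₀‖ with hrr
  set Ia : ℝ := ‖Ifn t‖ with hIa
  have hIa0 : 0 < Ia := norm_pos_iff.mpr (hI t ht0)
  have hrr0 : 0 ≤ rr := norm_nonneg _
  set S : ℝ := ∑ j ∈ Finset.range (n+2), rr^(j+1)/Ia^(j+1) with hS
  have hS0 : 0 ≤ S := Finset.sum_nonneg fun j _ => by positivity
  have hUabs : ‖U t‖ = mt * rr := by
    rw [hUdef]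
    simp only [norm_mul, Complex.norm_real, Real.norm_eq_abs]
    rw [abs_of_nonneg hmt0.le]
  set T : ℕ → ℝ := fun j => mt^j * rr^j / Ia^(j+1) with hT
  -- step 1
  have h1 : ‖iteratedDeriv (n+1) Ψ t‖
      ≤ ‖K‖ * c^(n+1) * ∑ j ∈ Finset.range (n+2),
          (Ncoef (n+1) j : ℝ) * (‖A‖ * T j) := by
    rw [hform, norm_mul, norm_mul, norm_mul, norm_pow]
    have habsneg : ‖-(c:ℂ)‖ = c := by
      rw [norm_neg, Complex.norm_real, Real.norm_eq_abs, abs_of_nonneg hc0]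
    rw [habsneg]
    have h2 : ‖SumF U Ifn (n+1) t‖
        ≤ ∑ j ∈ Finset.range (n+2), (Ncoef (n+1) j : ℝ) * T j := by
      refine le_trans (norm_sum_le _ _) (le_of_eq ?_)
      refine Finset.sum_congr rfl fun j _ => ?_
      rw [norm_mul, norm_mul, norm_pow, norm_inv, norm_pow, hUabs, Complex.norm_natCast,
        ← hIa, mul_pow, hT]
      field_simp
    calc ‖K‖ * ‖A‖ * c^(n+1) * ‖SumF U Ifn (n+1) t‖
        ≤ ‖K‖ * ‖A‖ * c^(n+1)
            * ∑ j ∈ Finset.range (n+2), (Ncoef (n+1) j : ℝ) * T j := by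
          refine mul_le_mul_of_nonneg_left h2 (by positivity)
      _ = ‖K‖ * c^(n+1) * ∑ j ∈ Finset.range (n+2),
            (Ncoef (n+1) j : ℝ) * (‖A‖ * T j) := by
          rw [Finset.mul_sum, Finset.mul_sum]
          refine Finset.sum_congr rfl fun j _ => by ring
  -- step 2 : per-term bound
  have hterm : ∀ j ∈ Finset.range (n+2),
      (Ncoef (n+1) j : ℝ) * (‖A‖ * T j)
        ≤ (Ncoef (n+1) j : ℝ) * (2 * mt * S) := by
    intro j hj
    match j with
    | 0 => simp [Ncoef_succ]
    | (k+1) =>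
      have hj2 : k + 1 ≤ n + 1 := by
        have := Finset.mem_range.mp hj; omega
      have hAle : ‖A‖ ≤ Ia + mt*rr := by
        have hAeq : A = Ifn t + U t := by rw [hIdef]; ring
        calc ‖A‖ = ‖Ifn t + U t‖ := by rw [← hAeq]
          _ ≤ Ia + ‖U t‖ := norm_add_le _ _
          _ = Ia + mt*rr := by rw [hUabs]
      have hmtj : mt^(k+1) ≤ mt := by
        calc mt^(k+1) ≤ mt^1 := pow_le_pow_of_le_one hmt0.le hmt1.le (by omega)
          _ = mt := pow_one mt
      have hmtj2 : mt^(k+2) ≤ mt := by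
        calc mt^(k+2) ≤ mt^1 := pow_le_pow_of_le_one hmt0.le hmt1.le (by omega)
          _ = mt := pow_one mt
      have hfrac1 : rr^(k+1)/Ia^(k+1) ≤ S :=
        Finset.single_le_sum (f := fun i => rr^(i+1)/Ia^(i+1))
          (fun i _ => by positivity) (Finset.mem_range.mpr (by omega : k < n+2))
      have hfrac2 : rr^(k+2)/Ia^(k+2) ≤ S :=
        Finset.single_le_sum (f := fun i => rr^(i+1)/Ia^(i+1))
          (fun i _ => by positivity) (Finset.mem_range.mpr (by omega : k+1 < n+2))
      have e2 : ‖A‖ * T (k+1) ≤ (Ia + mt*rr) * T (k+1) := by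
        refine mul_le_mul_of_nonneg_right hAle ?_
        simp only [hT]
        positivity
      have e3 : (Ia + mt*rr) * T (k+1)
          = mt^(k+1)*(rr^(k+1)/Ia^(k+1)) + mt^(k+2)*(rr^(k+2)/Ia^(k+2)) := by
        have hIane : Ia ≠ 0 := hIa0.ne'
        simp only [hT]
        field_simp
        ring
      have e4 : mt^(k+1)*(rr^(k+1)/Ia^(k+1)) ≤ mt * S :=
        mul_le_mul hmtj hfrac1 (by positivity) hmt0.le
      have e5 : mt^(k+2)*(rr^(k+2)/Ia^(k+2)) ≤ mt * S :=
        mul_le_mul hmtj2 hfrac2 (by positivity) hmt0.le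
      have e6 : ‖A‖ * T (k+1) ≤ 2 * mt * S := by
        rw [e3] at e2
        linarith
      exact mul_le_mul_of_nonneg_left e6 (by positivity)
  -- step 3 : sum bound
  have h3 : ∑ j ∈ Finset.range (n+2), (Ncoef (n+1) j : ℝ) * (‖A‖ * T j)
      ≤ M * (2 * mt * S) := by
    calc ∑ j ∈ Finset.range (n+2), (Ncoef (n+1) j : ℝ) * (‖A‖ * T j)
        ≤ ∑ j ∈ Finset.range (n+2), (Ncoef (n+1) j : ℝ) * (2 * mt * S) :=
          Finset.sum_le_sum hterm
      _ = M * (2 * mt * S) := by rw [hM, ← Finset.sum_mul]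
  -- step 4 : epsilon estimates
  have hsqnn : 0 ≤ Real.sqrt ε := Real.sqrt_nonneg _
  have hsq : Real.sqrt (a^2-1) ≤ 2*Real.sqrt ε := by
    have h4 : a^2 - 1 ≤ 4*ε := by nlinarith
    calc Real.sqrt (a^2-1) ≤ Real.sqrt (4*ε) := Real.sqrt_le_sqrt h4
      _ = 2*Real.sqrt ε := by
          rw [show (4:ℝ)*ε = 2^2*ε by norm_num, Real.sqrt_mul (by positivity) ε,
            Real.sqrt_sq (by norm_num : (0:ℝ) ≤ 2)]
  have hsq1 : Real.sqrt ε ≤ 1 := Real.sqrt_le_one.mpr (by linarith)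
  have hεsq : ε ≤ Real.sqrt ε := by nlinarith [Real.sq_sqrt hε0.le]
  have hlamsub : lam - 1 ≤ 10*Real.sqrt ε := by rw [hlam]; nlinarith
  have hlamle : lam ≤ 11 := by nlinarith
  have hKabs : ‖K‖ ≤ 120*Real.sqrt ε := by
    have e : K = (((l₂^2 - 1) * l₂⁻¹ : ℝ):ℂ) := by rw [hK]; push_cast; ring
    have hlamsq : 1 ≤ lam^2 := by nlinarith
    have e2 : |(l₂^2 - 1) * l₂⁻¹| = (lam^2 - 1) * lam⁻¹ := by
      rw [abs_mul, abs_inv, hl₂]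
      rw [show ((-lam)^2 : ℝ) = lam^2 by ring, abs_of_nonneg (by linarith : (0:ℝ) ≤ lam^2 - 1),
        abs_of_neg (by linarith : -lam < 0), neg_neg]
    rw [e, Complex.norm_real, Real.norm_eq_abs, e2]
    have : (lam^2 - 1) * lam⁻¹ ≤ lam^2 - 1 := by nlinarith
    nlinarith
  have hcle : c ≤ 20*Real.sqrt ε := by
    rw [hc]
    have := Real.log_le_sub_one_of_pos hlam0
    linarith
  have hexp : (Real.sqrt ε)^(n+2) = ε ^ ((1 + ((n+1:ℕ):ℝ))/2) := by
    rw [Real.sqrt_eq_rpow, ← Real.rpow_natCast (ε ^ ((1:ℝ)/2)) (n+2),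
      ← Real.rpow_mul hε0.le]
    congr 1
    push_cast
    ring
  have hE0 : 0 ≤ ε ^ ((1 + ((n+1:ℕ):ℝ))/2) := Real.rpow_nonneg hε0.le _
  have hKc : ‖K‖ * c^(n+1) ≤ 120 * 20^(n+1) * ε ^ ((1 + ((n+1:ℕ):ℝ))/2) := by
    have h6 : c^(n+1) ≤ (20*Real.sqrt ε)^(n+1) := pow_le_pow_left₀ hc0 hcle _
    calc ‖K‖ * c^(n+1)
        ≤ (120*Real.sqrt ε) * (20*Real.sqrt ε)^(n+1) :=
          mul_le_mul hKabs h6 (pow_nonneg hc0 _) (by positivity)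
      _ = 120 * 20^(n+1) * (Real.sqrt ε)^(n+2) := by rw [mul_pow]; ring
      _ = 120 * 20^(n+1) * ε ^ ((1 + ((n+1:ℕ):ℝ))/2) := by rw [hexp]
  -- final assembly
  calc ‖iteratedDeriv (n+1) Ψ t‖
      ≤ ‖K‖ * c^(n+1) * ∑ j ∈ Finset.range (n+2),
          (Ncoef (n+1) j : ℝ) * (‖A‖ * T j) := h1
    _ ≤ ‖K‖ * c^(n+1) * (M * (2 * mt * S)) := by
        exact mul_le_mul_of_nonneg_left h3
          (mul_nonneg (norm_nonneg _) (pow_nonneg hc0 _))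
    _ = (‖K‖ * c^(n+1)) * (2*M) * (mt * S) := by ring
    _ ≤ (120 * 20^(n+1) * ε ^ ((1 + ((n+1:ℕ):ℝ))/2)) * (2*(M+1)) * (mt * S) := by
        have hEnn : (0:ℝ) ≤ 120 * 20^(n+1) * ε ^ ((1 + ((n+1:ℕ):ℝ))/2) :=
          mul_nonneg (by positivity) hE0
        refine mul_le_mul (mul_le_mul hKc (by linarith) (by linarith) hEnn)
          le_rfl (mul_nonneg hmt0.le hS0) (mul_nonneg hEnn (by linarith))
    _ = 240 * 20^(n+1) * (M+1) * ε ^ ((1 + ((n+1:ℕ):ℝ))/2) * mt * S := by ring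
end

section
/- There exists a constant C > 0 such that for every ε ∈ (0, 1/2), every γ ∈ (1/2, 1), and every r ∈ [0, 10], one has Σ_{k=1}^∞ log(1/γ) · γ^k · ε · λ^{−2k} · J_k(r, ε)^{−2} ≤ C, where a = 1 + ε/2, λ = (2a² − 1) + 2a√(a² − 1), and J_k(r, ε) = (r + √ε)(1 − λ^{−2k}) + √ε. -/
/-- There exists a constant C > 0 such that for every ε ∈ (0, 1/2),
every γ ∈ (1/2, 1), and every r ∈ [0, 10], one has
Σ_{k=1}^∞ log(1/γ) · γ^k · ε · λ^{−2k} · J_k(r, ε)^{−2} ≤ C,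
where a = 1 + ε/2, λ = (2a² − 1) + 2a√(a² − 1), and
J_k(r, ε) = (r + √ε)(1 − λ^{−2k}) + √ε. -/
theorem stmt13 :
    ∃ C : ℝ, 0 < C ∧
      ∀ ε : ℝ, ε ∈ Set.Ioo (0 : ℝ) (1/2) →
        ∀ γ : ℝ, γ ∈ Set.Ioo (1/2 : ℝ) 1 →
          ∀ r : ℝ, r ∈ Set.Icc (0 : ℝ) 10 →
            ∀ a lam : ℝ,
              a = 1 + ε/2 →
              lam = (2*a^2 - 1) + 2*a*Real.sqrt (a^2 - 1) →
              Summable (fun k : ℕ =>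
                Real.log (1/γ) * γ^(k+1) * ε * lam⁻¹^(2*(k+1)) *
                  (((r + Real.sqrt ε) * (1 - lam⁻¹^(2*(k+1))) + Real.sqrt ε)⁻¹)^2) ∧
              ∑' k : ℕ,
                Real.log (1/γ) * γ^(k+1) * ε * lam⁻¹^(2*(k+1)) *
                  (((r + Real.sqrt ε) * (1 - lam⁻¹^(2*(k+1))) + Real.sqrt ε)⁻¹)^2 ≤ C := by
  refine ⟨1, one_pos, ?_⟩
  rintro ε ⟨hε0, hε1⟩ γ ⟨hγ0, hγ1⟩ r ⟨hr0, hr1⟩ a lam ha hlam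
  have hγpos : 0 < γ := by linarith
  have hL : 0 ≤ Real.log (1/γ) := Real.log_nonneg (by
    rw [le_div_iff₀ hγpos]; linarith)
  have hsq : 0 ≤ Real.sqrt (a^2 - 1) := Real.sqrt_nonneg _
  have ha1 : 1 ≤ a := by rw [ha]; linarith
  have hlam1 : 1 ≤ lam := by
    rw [hlam]
    nlinarith [mul_nonneg (by linarith : (0:ℝ) ≤ 2*a) hsq]
  have hlaminv : lam⁻¹ ≤ 1 := inv_le_one_of_one_le₀ hlam1
  have hlaminv0 : 0 ≤ lam⁻¹ := inv_nonneg.2 (by linarith)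
  have hse : 0 < Real.sqrt ε := Real.sqrt_pos.2 hε0
  set L := Real.log (1/γ) with hLdef
  -- per-term bound
  have key : ∀ k : ℕ,
      Real.log (1/γ) * γ^(k+1) * ε * lam⁻¹^(2*(k+1)) *
        (((r + Real.sqrt ε) * (1 - lam⁻¹^(2*(k+1))) + Real.sqrt ε)⁻¹)^2
        ≤ L * γ^(k+1) := by
    intro k
    set A := lam⁻¹^(2*(k+1)) with hA
    have hA0 : 0 ≤ A := pow_nonneg hlaminv0 _
    have hA1 : A ≤ 1 := pow_le_one₀ hlaminv0 hlaminv
    set J := (r + Real.sqrt ε) * (1 - A) + Real.sqrt ε with hJ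
    have hJge : Real.sqrt ε ≤ J := by nlinarith [hse.le]
    have hJpos : 0 < J := lt_of_lt_of_le hse hJge
    have hinv : J⁻¹ ≤ (Real.sqrt ε)⁻¹ := inv_anti₀ hse hJge
    have hinv0 : 0 ≤ J⁻¹ := inv_nonneg.2 hJpos.le
    have h2 : (J⁻¹)^2 ≤ ((Real.sqrt ε)⁻¹)^2 := by
      exact pow_le_pow_left₀ hinv0 hinv 2
    have h3 : ((Real.sqrt ε)⁻¹)^2 = ε⁻¹ := by
      rw [← Real.sqrt_inv, Real.sq_sqrt (inv_nonneg.2 hε0.le)]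
    have hmain : ε * A * (J⁻¹)^2 ≤ 1 := by
      have hεinv : ε * ε⁻¹ = 1 := mul_inv_cancel₀ hε0.ne'
      have hB : (J⁻¹)^2 ≤ ε⁻¹ := by rw [← h3]; exact h2
      calc ε * A * (J⁻¹)^2 ≤ (ε * 1) * ε⁻¹ := by
            apply mul_le_mul (mul_le_mul_of_nonneg_left hA1 hε0.le) hB
              (sq_nonneg _) (by positivity)
        _ = 1 := by rw [mul_one]; exact hεinv
    have hnn : 0 ≤ L * γ^(k+1) := by positivity
    calc Real.log (1/γ) * γ^(k+1) * ε * A * (J⁻¹)^2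
        = (L * γ^(k+1)) * (ε * A * (J⁻¹)^2) := by rw [hLdef]; ring
      _ ≤ (L * γ^(k+1)) * 1 := mul_le_mul_of_nonneg_left hmain hnn
      _ = L * γ^(k+1) := by ring
  have hnonneg : ∀ k : ℕ,
      0 ≤ Real.log (1/γ) * γ^(k+1) * ε * lam⁻¹^(2*(k+1)) *
        (((r + Real.sqrt ε) * (1 - lam⁻¹^(2*(k+1))) + Real.sqrt ε)⁻¹)^2 := by
    intro k; positivity
  have hgeom : Summable (fun k : ℕ => (L * γ) * γ^k) :=
    (summable_geometric_of_lt_one hγpos.le hγ1).mul_left _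
  have hbound : Summable (fun k : ℕ => L * γ^(k+1)) :=
    hgeom.congr (fun k => by ring)
  have hsummable := Summable.of_nonneg_of_le hnonneg key hbound
  refine ⟨hsummable, ?_⟩
  have htsum_le := Summable.tsum_le_tsum key hsummable hbound
  have htsum_bound : ∑' k : ℕ, L * γ^(k+1) = (L * γ) * (1 - γ)⁻¹ := by
    rw [show (fun k : ℕ => L * γ^(k+1)) = (fun k : ℕ => (L * γ) * γ^k) from
      funext (fun k => by ring), tsum_mul_left, tsum_geometric_of_lt_one hγpos.le hγ1]
  have hlog : L ≤ 1/γ - 1 := Real.log_le_sub_one_of_pos (by positivity)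
  have hfinal : (L * γ) * (1 - γ)⁻¹ ≤ 1 := by
    have h1γ : (0:ℝ) < 1 - γ := by linarith
    have hc : (1 - γ) * (1 - γ)⁻¹ = 1 := mul_inv_cancel₀ h1γ.ne'
    have hLγ : L * γ ≤ 1 - γ := by
      have := mul_le_mul_of_nonneg_right hlog hγpos.le
      have hg : (1/γ - 1) * γ = 1 - γ := by field_simp
      linarith [hg ▸ this]
    nlinarith [inv_nonneg.2 h1γ.le]
  calc ∑' k : ℕ, Real.log (1/γ) * γ^(k+1) * ε * lam⁻¹^(2*(k+1)) *
        (((r + Real.sqrt ε) * (1 - lam⁻¹^(2*(k+1))) + Real.sqrt ε)⁻¹)^2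
      ≤ ∑' k : ℕ, L * γ^(k+1) := htsum_le
    _ = (L * γ) * (1 - γ)⁻¹ := htsum_bound
    _ ≤ 1 := hfinal
end

section
/- There exists a constant C > 0 such that for every ε ∈ (0, 1/2), every γ ∈ (1/2, 1), and every r ∈ [0, 10], one has Σ_{k=1}^∞ γ^k · ε² · λ^{−2k} · [ r · J_k(r, ε)^{−3} + r² · J_k(r, ε)^{−4} ] ≤ C (r + √ε), where a = 1 + ε/2, λ = (2a² − 1) + 2a√(a² − 1), and J_k(r, ε) = (r + √ε)(1 − λ^{−2k}) + √ε. -/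
open Filter

lemma aux_tail_summable (N : ℕ) : Summable (fun k : ℕ => 1/((k:ℝ)+N+1)^2) := by
  have hsumbig : Summable (fun k : ℕ => 1/((k:ℝ)+1)^2) := by
    have := (summable_nat_add_iff (f := fun n : ℕ => 1/(n:ℝ)^2) 1).2
      (Real.summable_one_div_nat_pow.2 one_lt_two)
    convert this using 2 with k
    · rfl
    push_cast
    ring
  apply hsumbig.of_nonneg_of_le (fun k => by positivity)
  intro k
  apply one_div_le_one_div_of_le (by positivity)
  have : (0:ℝ) ≤ N := Nat.cast_nonneg N
  nlinarith [Nat.cast_nonneg (α := ℝ) k]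

lemma aux_tail (N : ℕ) (hN : 1 ≤ N) :
    ∑' k : ℕ, 1/((k:ℝ)+N+1)^2 ≤ 1/(N:ℝ) := by
  have hNpos : (0:ℝ) < N := by exact_mod_cast hN
  set t : ℕ → ℝ := fun k => 1/((k:ℝ)+N) - 1/((k:ℝ)+N+1) with ht
  have hpos : ∀ k : ℕ, (0:ℝ) < (k:ℝ)+N := fun k => by positivity
  have hteq : ∀ k : ℕ, t k = 1/(((k:ℝ)+N)*((k:ℝ)+N+1)) := by
    intro k
    have h1 := hpos k
    simp only [ht]
    field_simp
    ring
  have h1 : ∀ k : ℕ, 1/((k:ℝ)+N+1)^2 ≤ t k := by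
    intro k
    rw [hteq k]
    apply one_div_le_one_div_of_le
    · positivity
    · nlinarith [hpos k]
  have hsumbig : Summable (fun k : ℕ => 1/((k:ℝ)+1)^2) := by
    have := (summable_nat_add_iff (f := fun n : ℕ => 1/(n:ℝ)^2) 1).2
      (Real.summable_one_div_nat_pow.2 one_lt_two)
    convert this using 2 with k
    · rfl
    push_cast
    ring
  have hN1 : (1:ℝ) ≤ N := by exact_mod_cast hN
  have hsum1 := aux_tail_summable N
  have hsumt : Summable t := by
    apply hsumbig.of_nonneg_of_le
    · intro k
      rw [hteq k]
      positivity
    · intro k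
      rw [hteq k]
      apply one_div_le_one_div_of_le (by positivity)
      nlinarith [hpos k, Nat.cast_nonneg (α := ℝ) k]
  have htend : Tendsto (fun n : ℕ => ∑ i ∈ Finset.range n, t i) atTop (nhds (1/(N:ℝ))) := by
    have heq : ∀ n : ℕ, ∑ i ∈ Finset.range n, t i = 1/(N:ℝ) - 1/((n:ℝ)+N) := by
      intro n
      calc ∑ i ∈ Finset.range n, t i
          = ∑ i ∈ Finset.range n, ((fun i : ℕ => 1/((i:ℝ)+N)) i - (fun i : ℕ => 1/((i:ℝ)+N)) (i+1)) := by
            apply Finset.sum_congr rfl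
            intro i _
            push_cast [ht]
            ring
        _ = (fun i : ℕ => 1/((i:ℝ)+N)) 0 - (fun i : ℕ => 1/((i:ℝ)+N)) n :=
            Finset.sum_range_sub' (fun i : ℕ => 1/((i:ℝ)+N)) n
        _ = 1/(N:ℝ) - 1/((n:ℝ)+N) := by norm_num
    simp only [heq]
    have h0 : Tendsto (fun n : ℕ => ((n:ℝ)+N)⁻¹) atTop (nhds 0) :=
      tendsto_inv_atTop_zero.comp (tendsto_atTop_add_const_right atTop _ tendsto_natCast_atTop_atTop)
    have := (tendsto_const_nhds (x := 1/(N:ℝ)) (f := atTop (α := ℕ))).sub h0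
    simpa [one_div] using this
  have htsum : ∑' k, t k = 1/(N:ℝ) := tendsto_nhds_unique hsumt.hasSum.tendsto_sum_nat htend
  calc ∑' k : ℕ, 1/((k:ℝ)+N+1)^2 ≤ ∑' k, t k := Summable.tsum_le_tsum h1 hsum1 hsumt
    _ = 1/(N:ℝ) := htsum


lemma bern_aux (x δ : ℝ) (hx0 : 0 < x) (hx1 : x < 1) (hδ : δ = 1 - x) (q : ℕ) :
    (1+(q:ℝ)*δ)*x^q ≤ 1 := by
  have hδ0 : (0:ℝ) ≤ δ := by rw [hδ]; linarith
  have hδx0 : 0 ≤ δ/x := div_nonneg hδ0 hx0.le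
  have hq0 : (0:ℝ) ≤ (q:ℝ) := Nat.cast_nonneg q
  have hdx : δ ≤ δ/x := by
    rw [le_div_iff₀ hx0]
    nlinarith
  have h1 : 1+(q:ℝ)*δ ≤ (1+δ/x)^q := by
    calc 1+(q:ℝ)*δ ≤ 1+(q:ℝ)*(δ/x) := by nlinarith
      _ ≤ (1+δ/x)^q := one_add_mul_le_pow (by linarith : (-2:ℝ) ≤ δ/x) q
  have hxq0 : (0:ℝ) ≤ x^q := pow_nonneg hx0.le q
  calc (1+(q:ℝ)*δ)*x^q ≤ (1+δ/x)^q * x^q := by nlinarith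
    _ = ((1+δ/x)*x)^q := (mul_pow _ _ _).symm
    _ = 1 := by
        rw [show (1+δ/x)*x = 1 by field_simp; linarith]
        exact one_pow q

lemma nine_aux (x δ : ℝ) (hx0 : 0 < x) (hx1 : x < 1) (hδ : δ = 1 - x) (m : ℕ) :
    x^m*(1+(m:ℝ)*δ)^2 ≤ 9 := by
  have hδ0 : (0:ℝ) ≤ δ := by rw [hδ]; linarith
  have hδ1 : δ ≤ 1 := by rw [hδ]; linarith
  set q := m/2 with hq
  have hm2q : m ≤ 2*q+1 := by omega
  have hxq : x^m ≤ (x^q)^2 := by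
    rw [← pow_mul]
    exact pow_le_pow_of_le_one hx0.le hx1.le (by omega)
  have hcast : (m:ℝ) ≤ 2*(q:ℝ)+1 := by exact_mod_cast hm2q
  have hq0 : (0:ℝ) ≤ (q:ℝ) := Nat.cast_nonneg q
  have hm0 : (0:ℝ) ≤ (m:ℝ) := Nat.cast_nonneg m
  have h3 : 1+(m:ℝ)*δ ≤ 3*(1+(q:ℝ)*δ) := by nlinarith
  have hq1 : (1+(q:ℝ)*δ)*x^q ≤ 1 := bern_aux x δ hx0 hx1 hδ q
  have hq2 : (0:ℝ) ≤ 1+(q:ℝ)*δ := by nlinarith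
  have hxq0 : (0:ℝ) ≤ x^q := pow_nonneg hx0.le q
  have h1m : (0:ℝ) ≤ 1+(m:ℝ)*δ := by nlinarith
  calc x^m*(1+(m:ℝ)*δ)^2 ≤ (x^q)^2*(3*(1+(q:ℝ)*δ))^2 := by
        apply mul_le_mul hxq (pow_le_pow_left₀ h1m h3 2) (by positivity) (by positivity)
    _ = 9*((1+(q:ℝ)*δ)*x^q)^2 := by ring
    _ ≤ 9*1^2 := by nlinarith [hq1, mul_nonneg hq2 hxq0]
    _ = 9 := by norm_num

lemma term_bound (ε e s x δ r γ : ℝ) (m : ℕ) (hm1 : 1 ≤ m)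
    (hee : e^2 = ε) (he0 : 0 < e)
    (hs0 : 0 < s) (hse : e ≤ s) (hr0 : 0 ≤ r) (hrs : r ≤ s)
    (hx0 : 0 < x) (hx1 : x < 1) (hδ : δ = 1 - x) (hδe : e/4 ≤ δ)
    (hγ0 : 0 ≤ γ) (hγ1 : γ ≤ 1) :
    γ^m * ε^2 * x^m *
      (r * ((s*(1-x^m)+e)⁻¹)^3 + r^2*((s*(1-x^m)+e)⁻¹)^4)
      ≤ e*s*x^m + min (s^2*x^m) (144/(m:ℝ)^2) := by
  have hδ0 : (0:ℝ) < δ := by linarith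
  have hε0 : 0 < ε := by rw [← hee]; positivity
  set J := s*(1-x^m)+e with hJdef
  have hxm1 : x^m ≤ 1 := pow_le_one₀ hx0.le hx1.le
  have hxm0 : (0:ℝ) < x^m := pow_pos hx0 m
  have hJe' : e ≤ J := by
    rw [hJdef]
    have : 0 ≤ s*(1-x^m) := mul_nonneg hs0.le (by linarith)
    linarith
  have hJ0' : (0:ℝ) < J := lt_of_lt_of_le he0 hJe'
  have hγm : γ^m ≤ 1 := pow_le_one₀ hγ0 hγ1
  have hJinv : J⁻¹ ≤ e⁻¹ := inv_anti₀ he0 hJe'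
  have hJinv0 : (0:ℝ) ≤ J⁻¹ := by positivity
  have hexm : (0:ℝ) ≤ ε^2*x^m := mul_nonneg (sq_nonneg ε) hxm0.le
  have hE3 : ε^2 * (e⁻¹)^3 = e := by
    rw [← hee]
    field_simp
  have hE4 : ε^2 * (e⁻¹)^4 = 1 := by
    rw [← hee]
    field_simp
  have hA : ε^2 * x^m * (r * (J⁻¹)^3) ≤ e*s*x^m := by
    have h3 : (J⁻¹)^3 ≤ (e⁻¹)^3 := pow_le_pow_left₀ hJinv0 hJinv 3
    have h4 : r * (J⁻¹)^3 ≤ s * (e⁻¹)^3 := mul_le_mul hrs h3 (by positivity) hs0.le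
    calc ε^2 * x^m * (r * (J⁻¹)^3) ≤ ε^2 * x^m * (s * (e⁻¹)^3) :=
          mul_le_mul_of_nonneg_left h4 hexm
      _ = (ε^2 * (e⁻¹)^3) * (s * x^m) := by ring
      _ = e*s*x^m := by rw [hE3]; ring
  have hB1 : ε^2 * x^m * (r^2 * (J⁻¹)^4) ≤ s^2*x^m := by
    have h3 : (J⁻¹)^4 ≤ (e⁻¹)^4 := pow_le_pow_left₀ hJinv0 hJinv 4
    have hr2 : r^2 ≤ s^2 := pow_le_pow_left₀ hr0 hrs 2
    have h4 : r^2 * (J⁻¹)^4 ≤ s^2 * (e⁻¹)^4 := mul_le_mul hr2 h3 (by positivity) (by positivity)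
    calc ε^2 * x^m * (r^2 * (J⁻¹)^4) ≤ ε^2 * x^m * (s^2 * (e⁻¹)^4) :=
          mul_le_mul_of_nonneg_left h4 hexm
      _ = (ε^2 * (e⁻¹)^4) * (s^2 * x^m) := by ring
      _ = s^2*x^m := by rw [hE4]; ring
  have hB2 : ε^2 * x^m * (r^2 * (J⁻¹)^4) ≤ 144/(m:ℝ)^2 := by
    have hm0 : (0:ℝ) < (m:ℝ) := by exact_mod_cast hm1
    have hδ2 : ε ≤ 16*δ^2 := by
      have h := mul_self_le_mul_self (by positivity : (0:ℝ) ≤ e/4) hδe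
      nlinarith [h, hee]
    have hεJ : ε ≤ J^2 := by
      have h := mul_self_le_mul_self he0.le hJe'
      nlinarith [h, hee]
    have hx9 : x^m*(1+(m:ℝ)*δ)^2 ≤ 9 := nine_aux x δ hx0 hx1 hδ m
    have h1m : (0:ℝ) ≤ 1+(m:ℝ)*δ := by
      have := mul_nonneg hm0.le hδ0.le
      linarith
    have hL : s*((m:ℝ)*δ) ≤ J*(1+(m:ℝ)*δ) := by
      have h1 := bern_aux x δ hx0 hx1 hδ m
      have hs1 : s*((1+(m:ℝ)*δ)*x^m) ≤ s*1 := mul_le_mul_of_nonneg_left h1 hs0.le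
      have he1' : (0:ℝ) ≤ e*(1+(m:ℝ)*δ) := mul_nonneg he0.le h1m
      rw [hJdef]
      linarith [hs1, he1']
    have hcore : ε^2*x^m*r^2*(m:ℝ)^2 ≤ 144*J^4 := by
      have key : ε^2*x^m*r^2*(m:ℝ)^2*δ^2 ≤ 144*J^4*δ^2 := by
        have hL2 : (s*((m:ℝ)*δ))^2 ≤ (J*(1+(m:ℝ)*δ))^2 :=
          pow_le_pow_left₀ (by positivity) hL 2
        have hr2 : r^2 ≤ s^2 := pow_le_pow_left₀ hr0 hrs 2
        calc ε^2*x^m*r^2*(m:ℝ)^2*δ^2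
            ≤ ε^2*x^m*s^2*(m:ℝ)^2*δ^2 := by
              have h5 : (0:ℝ) ≤ ε^2*x^m*(m:ℝ)^2*δ^2 := by positivity
              have := mul_le_mul_of_nonneg_left hr2 h5
              linarith [this]
          _ = ε^2*x^m*(s*((m:ℝ)*δ))^2 := by ring
          _ ≤ ε^2*x^m*(J*(1+(m:ℝ)*δ))^2 := mul_le_mul_of_nonneg_left hL2 hexm
          _ = ε^2*(x^m*(1+(m:ℝ)*δ)^2)*J^2 := by ring
          _ ≤ ε^2*9*J^2 := by
              have h6 : (0:ℝ) ≤ ε^2*J^2 := by positivity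
              have := mul_le_mul_of_nonneg_left hx9 h6
              linarith [this]
          _ = 9*(ε*(ε*J^2)) := by ring
          _ ≤ 9*((16*δ^2)*(J^2*J^2)) := by
              apply mul_le_mul_of_nonneg_left _ (by norm_num)
              apply mul_le_mul hδ2 _ _ (by positivity)
              · exact mul_le_mul_of_nonneg_right hεJ (sq_nonneg J)
              · positivity
          _ = 144*J^4*δ^2 := by ring
      exact le_of_mul_le_mul_right key (by positivity)
    rw [le_div_iff₀ (by positivity)]
    calc ε^2 * x^m * (r^2 * (J⁻¹)^4) * (m:ℝ)^2
        = (ε^2*x^m*r^2*(m:ℝ)^2) * (J^4)⁻¹ := by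
          rw [inv_pow]
          ring
      _ ≤ (144*J^4) * (J^4)⁻¹ := mul_le_mul_of_nonneg_right hcore (by positivity)
      _ = 144 := by
          rw [mul_assoc, mul_inv_cancel₀ (by positivity : (J^4:ℝ) ≠ 0), mul_one]
  have hXA : (0:ℝ) ≤ ε^2 * x^m * (r * (J⁻¹)^3) :=
    mul_nonneg hexm (mul_nonneg hr0 (pow_nonneg hJinv0 3))
  have hXB : (0:ℝ) ≤ ε^2 * x^m * (r^2 * (J⁻¹)^4) :=
    mul_nonneg hexm (mul_nonneg (sq_nonneg r) (pow_nonneg hJinv0 4))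
  have hF1 : γ^m * ε^2 * x^m * (r * (J⁻¹)^3 + r^2*(J⁻¹)^4)
      ≤ ε^2 * x^m * (r * (J⁻¹)^3) + ε^2 * x^m * (r^2 * (J⁻¹)^4) := by
    have heqF : γ^m * ε^2 * x^m * (r * (J⁻¹)^3 + r^2*(J⁻¹)^4)
        = γ^m * (ε^2 * x^m * (r * (J⁻¹)^3) + ε^2 * x^m * (r^2 * (J⁻¹)^4)) := by ring
    rw [heqF]
    exact mul_le_of_le_one_left (by linarith) hγm
  have hmin : ε^2 * x^m * (r^2 * (J⁻¹)^4) ≤ min (s^2*x^m) (144/(m:ℝ)^2) :=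
    le_min hB1 hB2
  calc γ^m * ε^2 * x^m * (r * (J⁻¹)^3 + r^2*(J⁻¹)^4)
      ≤ ε^2 * x^m * (r * (J⁻¹)^3) + ε^2 * x^m * (r^2 * (J⁻¹)^4) := hF1
    _ ≤ e*s*x^m + min (s^2*x^m) (144/(m:ℝ)^2) := add_le_add hA hmin

set_option maxHeartbeats 1600000 in
/-- There exists a constant C > 0 such that for every ε ∈ (0, 1/2),
every γ ∈ (1/2, 1), and every r ∈ [0, 10], one has
Σ_{k=1}^∞ γ^k · ε² · λ^{−2k} · [ r · J_k(r, ε)^{−3} + r² · J_k(r, ε)^{−4} ] ≤ C (r + √ε),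
where a = 1 + ε/2, λ = (2a² − 1) + 2a√(a² − 1), and
J_k(r, ε) = (r + √ε)(1 − λ^{−2k}) + √ε. -/
theorem stmt14 :
    ∃ C : ℝ, 0 < C ∧
      ∀ ε : ℝ, ε ∈ Set.Ioo (0 : ℝ) (1/2) →
        ∀ γ : ℝ, γ ∈ Set.Ioo (1/2 : ℝ) 1 →
          ∀ r : ℝ, r ∈ Set.Icc (0 : ℝ) 10 →
            ∀ a lam : ℝ,
              a = 1 + ε/2 →
              lam = (2*a^2 - 1) + 2*a*Real.sqrt (a^2 - 1) →
              Summable (fun k : ℕ =>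
                γ^(k+1) * ε^2 * lam⁻¹^(2*(k+1)) *
                  (r * (((r + Real.sqrt ε) * (1 - lam⁻¹^(2*(k+1))) + Real.sqrt ε)⁻¹)^3 +
                   r^2 * (((r + Real.sqrt ε) * (1 - lam⁻¹^(2*(k+1))) + Real.sqrt ε)⁻¹)^4)) ∧
              ∑' k : ℕ,
                γ^(k+1) * ε^2 * lam⁻¹^(2*(k+1)) *
                  (r * (((r + Real.sqrt ε) * (1 - lam⁻¹^(2*(k+1))) + Real.sqrt ε)⁻¹)^3 +
                   r^2 * (((r + Real.sqrt ε) * (1 - lam⁻¹^(2*(k+1))) + Real.sqrt ε)⁻¹)^4)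
                ≤ C * (r + Real.sqrt ε) := by
  refine ⟨100, by norm_num, ?_⟩
  rintro ε ⟨hε0, hε2⟩ γ ⟨hγ0, hγ1⟩ r ⟨hr0, hr10⟩ a lam ha hlam
  set e := Real.sqrt ε with hedef
  have he0 : 0 < e := Real.sqrt_pos.2 hε0
  have hee : e^2 = ε := Real.sq_sqrt hε0.le
  have he1 : e ≤ 1 := by
    rw [hedef, show (1:ℝ) = Real.sqrt 1 by simp]
    exact Real.sqrt_le_sqrt (by linarith)
  set s := r + e with hsdef
  have hs0 : 0 < s := by positivity
  have hse : e ≤ s := by rw [hsdef]; linarith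
  have hs11 : s ≤ 11 := by rw [hsdef]; linarith
  have hrs : r ≤ s := by rw [hsdef]; linarith
  -- lambda bounds
  have ha1 : (1:ℝ) ≤ a := by rw [ha]; linarith
  have ha54 : a ≤ 5/4 := by rw [ha]; linarith
  have hsq1 : e ≤ Real.sqrt (a^2-1) := by
    rw [hedef]
    apply Real.sqrt_le_sqrt
    rw [ha]; nlinarith
  have hsq0 : 0 ≤ Real.sqrt (a^2-1) := Real.sqrt_nonneg _
  have hsq2 : Real.sqrt (a^2-1) ≤ 3/4 := by
    rw [show (3/4 : ℝ) = Real.sqrt ((3/4)^2) from (Real.sqrt_sq (by norm_num)).symm]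
    apply Real.sqrt_le_sqrt
    rw [ha]; nlinarith
  have hlam1 : 1 + 2*e ≤ lam := by rw [hlam]; nlinarith
  have hlam4 : lam ≤ 4 := by rw [hlam]; nlinarith
  have hlampos : 0 < lam := by linarith
  set x := lam⁻¹^2 with hxdef
  have hx0 : 0 < x := by rw [hxdef]; positivity
  have hx1 : x < 1 := by
    rw [hxdef]
    have h1 : lam⁻¹ < 1 := inv_lt_one_of_one_lt₀ (by linarith)
    have h2 : 0 < lam⁻¹ := inv_pos.2 hlampos
    nlinarith
  set δ := 1 - x with hδdef
  have hδ0 : 0 < δ := by rw [hδdef]; linarith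
  have hδe : e/4 ≤ δ := by
    have hu : lam⁻¹ * (1+2*e) ≤ 1 := by
      have h := mul_le_mul_of_nonneg_left hlam1 (le_of_lt (inv_pos.2 hlampos))
      rwa [inv_mul_cancel₀ hlampos.ne'] at h
    have hu0 : 0 < lam⁻¹ := inv_pos.2 hlampos
    have hA0 : 0 ≤ lam⁻¹ * (1+2*e) := by positivity
    have hu2 : (lam⁻¹ * (1+2*e))^2 ≤ 1 := by
      have h := mul_le_mul hu hu hA0 zero_le_one
      linarith [h]
    have hgoal : lam⁻¹^2 ≤ 1 - e/4 := by
      have hq : lam⁻¹^2 * (1+4*e) ≤ 1 := by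
        have h4 := sq_nonneg (e*lam⁻¹)
        linarith [hu2, h4]
      have hsqe : e^2 ≤ e := by
        have h := mul_le_mul_of_nonneg_right he1 he0.le
        linarith [h]
      have h2 : lam⁻¹^2 * (1+4*e) ≤ (1 - e/4)*(1+4*e) := by linarith [hq, hsqe, he0]
      exact le_of_mul_le_mul_right h2 (by linarith)
    rw [hδdef, hxdef]
    linarith
  -- the rewritten function
  set F : ℕ → ℝ := fun k => γ^(k+1) * ε^2 * x^(k+1) *
      (r * ((s*(1-x^(k+1))+e)⁻¹)^3 + r^2*((s*(1-x^(k+1))+e)⁻¹)^4) with hFdef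
  have hfun : (fun k : ℕ =>
      γ^(k+1) * ε^2 * lam⁻¹^(2*(k+1)) *
        (r * ((s * (1 - lam⁻¹^(2*(k+1))) + e)⁻¹)^3 +
         r^2 * ((s * (1 - lam⁻¹^(2*(k+1))) + e)⁻¹)^4)) = F := by
    funext k
    rw [hFdef, hxdef]
    simp only [← pow_mul]
  rw [hfun]
  have hxm1 : ∀ m : ℕ, x^m ≤ 1 := fun m => pow_le_one₀ hx0.le hx1.le
  have hJ0 : ∀ m : ℕ, 0 < s*(1-x^m)+e := by
    intro m
    have h1 : 0 ≤ s*(1-x^m) := mul_nonneg hs0.le (by linarith [hxm1 m])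
    linarith
  -- key per-term bound
  have hkey : ∀ k : ℕ, F k ≤ e*s*x^(k+1) + min (s^2*x^(k+1)) (144/((k:ℝ)+1)^2) := by
    intro k
    have hb := term_bound ε e s x δ r γ (k+1) (by omega) hee he0 hs0 hse hr0 hrs
      hx0 hx1 hδdef hδe (by linarith) hγ1.le
    have hcast : (((k+1:ℕ)):ℝ) = (k:ℝ)+1 := by push_cast; ring
    rw [hcast] at hb
    exact hb
  -- nonnegativity of F
  have hFnonneg : ∀ k : ℕ, 0 ≤ F k := by
    intro k
    rw [hFdef]
    apply mul_nonneg
    · apply mul_nonneg (mul_nonneg (pow_nonneg (by linarith) _) (sq_nonneg ε)) (pow_nonneg hx0.le _)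
    · apply add_nonneg
      · exact mul_nonneg hr0 (pow_nonneg (le_of_lt (inv_pos.2 (hJ0 (k+1)))) 3)
      · exact mul_nonneg (sq_nonneg r) (pow_nonneg (le_of_lt (inv_pos.2 (hJ0 (k+1)))) 4)
  -- summability of the bound pieces
  have hg1sum : Summable (fun k : ℕ => e*s*x^(k+1)) := by
    apply Summable.congr ((summable_geometric_of_lt_one hx0.le hx1).mul_left (e*s*x))
    intro k
    rw [pow_succ]
    ring
  have hg2sum' : Summable (fun k : ℕ => s^2*x^(k+1)) := by
    apply Summable.congr ((summable_geometric_of_lt_one hx0.le hx1).mul_left (s^2*x))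
    intro k
    rw [pow_succ]
    ring
  have hg2sum : Summable (fun k : ℕ => min (s^2*x^(k+1)) (144/((k:ℝ)+1)^2)) := by
    apply hg2sum'.of_nonneg_of_le
    · intro k
      apply le_min (by positivity) (by positivity)
    · intro k
      exact min_le_left _ _
  have hgsum : Summable (fun k : ℕ => e*s*x^(k+1) + min (s^2*x^(k+1)) (144/((k:ℝ)+1)^2)) :=
    hg1sum.add hg2sum
  have hFsum : Summable F := Summable.of_nonneg_of_le hFnonneg hkey hgsum
  refine ⟨hFsum, ?_⟩
  -- bound for the geometric part
  have hsum1 : ∑' k : ℕ, e*s*x^(k+1) ≤ 4*s := by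
    have heq : (fun k : ℕ => e*s*x^(k+1)) = fun k : ℕ => (e*s*x)*x^k := by
      funext k
      rw [pow_succ]
      ring
    rw [heq, tsum_mul_left, tsum_geometric_of_lt_one hx0.le hx1]
    have hδinv : (1-x)⁻¹ = δ⁻¹ := by rw [hδdef]
    rw [hδinv]
    have h1 : e ≤ 4*δ := by linarith
    calc e*s*x*δ⁻¹ ≤ (4*δ)*s*1*δ⁻¹ := by
          apply mul_le_mul_of_nonneg_right _ (le_of_lt (inv_pos.2 hδ0))
          apply mul_le_mul _ hx1.le hx0.le (by positivity)
          exact mul_le_mul_of_nonneg_right h1 hs0.le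
      _ = 4*s*(δ*δ⁻¹) := by ring
      _ = 4*s := by rw [mul_inv_cancel₀ hδ0.ne']; ring
  -- split bound for the min part
  have hsum2 : ∑' k : ℕ, min (s^2*x^(k+1)) (144/((k:ℝ)+1)^2) ≤ 35*s := by
    set N := Nat.floor (12/s) + 1 with hNdef
    have hN1 : 1 ≤ N := by omega
    have hNR' : 12 < (N:ℝ)*s := by
      have h := Nat.lt_floor_add_one (12/s)
      rw [div_lt_iff₀ hs0] at h
      rw [hNdef]
      push_cast
      linarith [h]
    have hNs : (N:ℝ)*s ≤ 12 + s := by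
      have h1 : ((Nat.floor (12/s) : ℕ):ℝ)*s ≤ 12 := by
        rw [← le_div_iff₀ hs0]
        exact Nat.floor_le (by positivity)
      rw [hNdef]
      push_cast
      linarith [h1]
    have hN0 : (0:ℝ) < N := by
      have h : 0 < N := hN1
      exact_mod_cast h
    have hsplit := Summable.sum_add_tsum_nat_add
      (f := fun k : ℕ => min (s^2*x^(k+1)) (144/((k:ℝ)+1)^2)) N hg2sum
    rw [← hsplit]
    have hpart : ∑ i ∈ Finset.range N, min (s^2*x^(i+1)) (144/((i:ℝ)+1)^2) ≤ 23*s := by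
      have hstep : ∀ i ∈ Finset.range N, min (s^2*x^(i+1)) (144/((i:ℝ)+1)^2) ≤ s^2 := by
        intro i _
        apply le_trans (min_le_left _ _)
        have h1 := hxm1 (i+1)
        have h2 : (0:ℝ) ≤ s^2 := sq_nonneg s
        nlinarith [h1, h2]
      calc ∑ i ∈ Finset.range N, min (s^2*x^(i+1)) (144/((i:ℝ)+1)^2)
          ≤ ∑ _i ∈ Finset.range N, s^2 := Finset.sum_le_sum hstep
        _ = (N:ℝ)*s^2 := by rw [Finset.sum_const, Finset.card_range, nsmul_eq_mul]
        _ ≤ 23*s := by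
            have h11 : s^2 ≤ 11*s := by nlinarith [hs0, hs11]
            have h2 := mul_le_mul_of_nonneg_right hNs hs0.le
            have h3 : (N:ℝ)*s^2 = ((N:ℝ)*s)*s := by ring
            linarith [h2, h11, h3]
    have htail : ∑' k : ℕ, min (s^2*x^((k+N)+1)) (144/(((k+N:ℕ):ℝ)+1)^2) ≤ 12*s := by
      have hper : ∀ k : ℕ, min (s^2*x^((k+N)+1)) (144/(((k+N:ℕ):ℝ)+1)^2)
          ≤ 144*(1/((k:ℝ)+N+1)^2) := by
        intro k
        apply le_trans (min_le_right _ _)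
        have hc : (((k+N:ℕ):ℝ)+1) = (k:ℝ)+N+1 := by push_cast; ring
        rw [hc, mul_one_div]
      have hlhs : Summable (fun k : ℕ => min (s^2*x^((k+N)+1)) (144/(((k+N:ℕ):ℝ)+1)^2)) := by
        have h := (summable_nat_add_iff
          (f := fun k : ℕ => min (s^2*x^(k+1)) (144/((k:ℝ)+1)^2)) N).2 hg2sum
        exact h
      calc ∑' k : ℕ, min (s^2*x^((k+N)+1)) (144/(((k+N:ℕ):ℝ)+1)^2)
          ≤ ∑' k : ℕ, 144*(1/((k:ℝ)+N+1)^2) :=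
            Summable.tsum_le_tsum hper hlhs ((aux_tail_summable N).mul_left 144)
        _ = 144 * ∑' k : ℕ, 1/((k:ℝ)+N+1)^2 := tsum_mul_left
        _ ≤ 144 * (1/(N:ℝ)) := mul_le_mul_of_nonneg_left (aux_tail N hN1) (by norm_num)
        _ ≤ 12*s := by
            rw [mul_one_div, div_le_iff₀ hN0]
            linarith [hNR']
    calc (∑ i ∈ Finset.range N, min (s^2*x^(i+1)) (144/((i:ℝ)+1)^2)) +
          ∑' k : ℕ, min (s^2*x^((k+N)+1)) (144/(((k+N:ℕ):ℝ)+1)^2)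
        ≤ 23*s + 12*s := add_le_add hpart htail
      _ = 35*s := by ring
  calc ∑' k, F k ≤ ∑' k : ℕ, (e*s*x^(k+1) + min (s^2*x^(k+1)) (144/((k:ℝ)+1)^2)) :=
        Summable.tsum_le_tsum hkey hFsum hgsum
    _ = (∑' k : ℕ, e*s*x^(k+1)) + ∑' k : ℕ, min (s^2*x^(k+1)) (144/((k:ℝ)+1)^2) :=
        Summable.tsum_add hg1sum hg2sum
    _ ≤ 4*s + 35*s := add_le_add hsum1 hsum2
    _ ≤ 100*s := by nlinarith [hs0]
end

section
/- There exists a constant C > 0 such that for every ε ∈ (0, 1/2), every γ ∈ (1/2, 1), and every r ∈ [0, 10], one has Σ_{k=1}^∞ γ^k · ε^{3/2} · λ^{−2k} · [ J_k(r, ε)^{−2} + r · J_k(r, ε)^{−3} ] ≤ C, where a = 1 + ε/2, λ = (2a² − 1) + 2a√(a² − 1), and J_k(r, ε) = (r + √ε)(1 − λ^{−2k}) + √ε. -/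
lemma aux1 (X Y c : ℝ) (hX : 0 < X) (hXY : X ≤ Y) (hY2 : Y ≤ 2*X) (hc0 : 0 ≤ c)
    (hc : c ≤ Y - X) : c * (X⁻¹)^3 ≤ 2*((X⁻¹)^2 - (Y⁻¹)^2) := by
  have hY : 0 < Y := lt_of_lt_of_le hX hXY
  rw [inv_pow, inv_pow, inv_pow, ← div_eq_mul_inv]
  have h : (X^2)⁻¹ - (Y^2)⁻¹ = (Y^2 - X^2) / (X^2 * Y^2) := by
    field_simp
  rw [h, ← mul_div_assoc, div_le_div_iff₀ (by positivity) (by positivity)]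
  nlinarith [mul_nonneg (mul_nonneg (sub_nonneg.2 hc) (sq_nonneg X)) (sq_nonneg Y),
    mul_nonneg (mul_nonneg (mul_nonneg (sub_nonneg.2 hXY) (sub_nonneg.2 hY2)) hX.le)
      (mul_pos hX hY).le,
    mul_nonneg (mul_nonneg (sub_nonneg.2 hXY) (sq_nonneg X)) hX.le]

set_option maxHeartbeats 1000000 in
/-- There exists a constant C > 0 such that for every ε ∈ (0, 1/2),
every γ ∈ (1/2, 1), and every r ∈ [0, 10], one has
Σ_{k=1}^∞ γ^k · ε^{3/2} · λ^{−2k} · [ J_k(r, ε)^{−2} + r · J_k(r, ε)^{−3} ] ≤ C,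
where a = 1 + ε/2, λ = (2a² − 1) + 2a√(a² − 1), and
J_k(r, ε) = (r + √ε)(1 − λ^{−2k}) + √ε. -/
theorem stmt15 :
    ∃ C : ℝ, 0 < C ∧
      ∀ ε : ℝ, ε ∈ Set.Ioo (0 : ℝ) (1/2) →
        ∀ γ : ℝ, γ ∈ Set.Ioo (1/2 : ℝ) 1 →
          ∀ r : ℝ, r ∈ Set.Icc (0 : ℝ) 10 →
            ∀ a lam : ℝ,
              a = 1 + ε/2 →
              lam = (2*a^2 - 1) + 2*a*Real.sqrt (a^2 - 1) →
              Summable (fun k : ℕ =>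
                γ^(k+1) * ε ^ ((3 : ℝ)/2) * lam⁻¹^(2*(k+1)) *
                  ((((r + Real.sqrt ε) * (1 - lam⁻¹^(2*(k+1))) + Real.sqrt ε)⁻¹)^2 +
                   r * (((r + Real.sqrt ε) * (1 - lam⁻¹^(2*(k+1))) + Real.sqrt ε)⁻¹)^3)) ∧
              ∑' k : ℕ,
                γ^(k+1) * ε ^ ((3 : ℝ)/2) * lam⁻¹^(2*(k+1)) *
                  ((((r + Real.sqrt ε) * (1 - lam⁻¹^(2*(k+1))) + Real.sqrt ε)⁻¹)^2 +
                   r * (((r + Real.sqrt ε) * (1 - lam⁻¹^(2*(k+1))) + Real.sqrt ε)⁻¹)^3)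
                ≤ C := by
  refine ⟨100, by norm_num, ?_⟩
  rintro ε ⟨hε0, hε2⟩ γ ⟨hγ0, hγ1⟩ r ⟨hr0, hr10⟩ a lam ha hlam
  set s := Real.sqrt ε with hs
  have hs0 : 0 < s := Real.sqrt_pos.mpr hε0
  have hs2 : s^2 = ε := Real.sq_sqrt hε0.le
  have hε32 : ε ^ ((3:ℝ)/2) = s^3 := by
    rw [hs, Real.sqrt_eq_rpow, ← Real.rpow_natCast (ε ^ ((1:ℝ)/2)) 3,
      ← Real.rpow_mul hε0.le]
    norm_num
  -- facts about a and lam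
  have ha1 : 1 < a := by rw [ha]; linarith
  have haa : ε ≤ a^2 - 1 := by rw [ha]; nlinarith
  have hsa : s ≤ Real.sqrt (a^2-1) := Real.sqrt_le_sqrt haa
  have hsa2 : (Real.sqrt (a^2-1))^2 = a^2-1 := Real.sq_sqrt (by nlinarith)
  have hsa' : Real.sqrt (a^2-1) ≤ 3/4 := by
    rw [show (3/4:ℝ) = Real.sqrt ((3/4)^2) by rw [Real.sqrt_sq (by norm_num)]]
    apply Real.sqrt_le_sqrt
    rw [ha]; nlinarith
  have hsqnn : 0 ≤ Real.sqrt (a^2-1) := Real.sqrt_nonneg _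
  have hlam1 : 1 < lam := by rw [hlam]; nlinarith
  have hlam4 : lam ≤ 4 := by rw [hlam]; nlinarith
  have hlam0 : 0 < lam := by linarith
  have hlamS : 2*s ≤ lam - 1 := by rw [hlam]; nlinarith
  -- q = lam⁻²
  simp only [pow_mul]
  set q := lam⁻¹ ^ 2 with hqdef
  have hql : q * lam^2 = 1 := by
    rw [hqdef]; field_simp
  have hq0 : 0 < q := by positivity
  have hqe : q = (lam^2)⁻¹ := by rw [hqdef, inv_pow]
  have hlam2 : 1 < lam^2 := one_lt_pow₀ hlam1 (by norm_num)
  have h16 : lam^2 ≤ 16 := by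
    calc lam^2 ≤ 4^2 := pow_le_pow_left₀ hlam0.le hlam4 2
    _ = 16 := by norm_num
  have hq1 : q < 1 := by rw [hqe]; exact inv_lt_one_of_one_lt₀ hlam2
  have hqδ : s/4 ≤ 1 - q := by
    have h1q : 1 - q = (lam^2 - 1)/lam^2 := by
      rw [hqe]; field_simp
    rw [h1q, le_div_iff₀ (by positivity)]
    nlinarith [mul_nonneg (by linarith : (0:ℝ) ≤ lam - 1 - 2*s) (by linarith : (0:ℝ) ≤ lam + 1),
      mul_nonneg hs0.le (by linarith : (0:ℝ) ≤ 16 - lam^2),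
      mul_nonneg hs0.le (by linarith : (0:ℝ) ≤ lam - 1)]
  have hδ0 : 0 < 1 - q := by linarith [hs0]
  -- basic facts about J-values
  have hqk1 : ∀ k : ℕ, q^k ≤ 1 := fun k => pow_le_one₀ hq0.le hq1.le
  have hX : ∀ k : ℕ, s ≤ (r + s) * (1 - q^(k+1)) + s := by
    intro k
    have h1 := mul_nonneg (by linarith : (0:ℝ) ≤ r + s)
      (by linarith [hqk1 (k+1)] : (0:ℝ) ≤ 1 - q^(k+1))
    linarith
  have hX0 : ∀ k : ℕ, 0 < (r + s) * (1 - q^(k+1)) + s := fun k => lt_of_lt_of_le hs0 (hX k)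
  -- summability
  have hnn : ∀ k : ℕ, 0 ≤ γ^(k+1) * ε ^ ((3 : ℝ)/2) * q^(k+1) *
      ((((r + s) * (1 - q^(k+1)) + s)⁻¹)^2 + r * (((r + s) * (1 - q^(k+1)) + s)⁻¹)^3) := by
    intro k
    have := (hX0 k).le
    positivity
  have hle11 : ∀ k : ℕ, γ^(k+1) * ε ^ ((3 : ℝ)/2) * q^(k+1) *
      ((((r + s) * (1 - q^(k+1)) + s)⁻¹)^2 + r * (((r + s) * (1 - q^(k+1)) + s)⁻¹)^3)
      ≤ 11 * q^k := by
    intro k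
    have hXk := hX k
    have hX0k := hX0 k
    have hi : ((r + s) * (1 - q^(k+1)) + s)⁻¹ ≤ s⁻¹ := by
      exact inv_anti₀ hs0 hXk
    have hinn : 0 ≤ ((r + s) * (1 - q^(k+1)) + s)⁻¹ := by positivity
    have h2 : (((r + s) * (1 - q^(k+1)) + s)⁻¹)^2 ≤ (s⁻¹)^2 :=
      pow_le_pow_left₀ hinn hi 2
    have h3 : (((r + s) * (1 - q^(k+1)) + s)⁻¹)^3 ≤ (s⁻¹)^3 :=
      pow_le_pow_left₀ hinn hi 3
    have hγk : γ^(k+1) ≤ 1 := pow_le_one₀ (by linarith) hγ1.le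
    have hγk0 : 0 ≤ γ^(k+1) := pow_nonneg (by linarith) _
    have hqk : q^(k+1) ≤ q^k := pow_le_pow_of_le_one hq0.le hq1.le (Nat.le_succ k)
    have hq0k : 0 ≤ q^(k+1) := pow_nonneg hq0.le _
    calc γ^(k+1) * ε ^ ((3 : ℝ)/2) * q^(k+1) *
        ((((r + s) * (1 - q^(k+1)) + s)⁻¹)^2 + r * (((r + s) * (1 - q^(k+1)) + s)⁻¹)^3)
        ≤ 1 * (s^3) * q^k * ((s⁻¹)^2 + 10 * (s⁻¹)^3) := by
          rw [hε32]
          apply mul_le_mul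
          · apply mul_le_mul
            · apply mul_le_mul hγk le_rfl (by positivity) (by norm_num)
            · exact hqk
            · exact hq0k
            · positivity
          · have : r * (((r + s) * (1 - q^(k+1)) + s)⁻¹)^3 ≤ 10 * (s⁻¹)^3 := by
              apply mul_le_mul hr10 h3 (by positivity) (by norm_num)
            linarith
          · positivity
          · positivity
        _ = (s + 10) * q^k := by
          field_simp
        _ ≤ 11 * q^k := by
          have hs1 : s ≤ 1 := by
            rw [hs, show (1:ℝ) = Real.sqrt 1 by simp]
            exact Real.sqrt_le_sqrt (by linarith)
          have := pow_nonneg hq0.le k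
          nlinarith
  have hsumm : Summable (fun k : ℕ => γ^(k+1) * ε ^ ((3 : ℝ)/2) * q^(k+1) *
      ((((r + s) * (1 - q^(k+1)) + s)⁻¹)^2 + r * (((r + s) * (1 - q^(k+1)) + s)⁻¹)^3)) := by
    apply Summable.of_nonneg_of_le hnn hle11
    exact (summable_geometric_of_lt_one hq0.le hq1).mul_left 11
  refine ⟨hsumm, ?_⟩
  -- partial sum bound
  apply Summable.tsum_le_of_sum_range_le hsumm
  intro n
  set u : ℕ → ℝ := fun m => (((r + s) * (1 - q^(m+1)) + s)⁻¹)^2 with hu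
  have hterm : ∀ k : ℕ, γ^(k+1) * ε ^ ((3 : ℝ)/2) * q^(k+1) *
      ((((r + s) * (1 - q^(k+1)) + s)⁻¹)^2 + r * (((r + s) * (1 - q^(k+1)) + s)⁻¹)^3)
      ≤ s * q^(k+1) + (2*s^3/(1-q)) * (u k - u (k+1)) := by
    intro k
    rw [hε32, hu]
    set X := (r + s) * (1 - q^(k+1)) + s with hXdef
    set Y := (r + s) * (1 - q^(k+1+1)) + s with hYdef
    have hXpos : 0 < X := hX0 k
    have hXs : s ≤ X := hX k
    have hq2 : q^(k+1+1) ≤ q^(k+1) := pow_le_pow_of_le_one hq0.le hq1.le (by omega)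
    have hrs : (0:ℝ) ≤ r + s := by linarith only [hr0, hs0]
    have hqpk : (0:ℝ) ≤ q^(k+1) := pow_nonneg hq0.le _
    have hXY : X ≤ Y := by
      rw [hXdef, hYdef]
      have h := mul_le_mul_of_nonneg_left
        (by linarith only [hq2] : 1 - q^(k+1) ≤ 1 - q^(k+1+1)) hrs
      linarith only [h]
    have hYX : Y - X = (r+s)*((1-q)*q^(k+1)) := by
      rw [hXdef, hYdef]; ring
    have hc : r*(1-q)*q^(k+1) ≤ Y - X := by
      rw [hYX]
      have h := mul_le_mul_of_nonneg_right
        (by linarith only [hs0] : r ≤ r + s) (mul_nonneg hδ0.le hqpk)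
      calc r*(1-q)*q^(k+1) = r*((1-q)*q^(k+1)) := by ring
        _ ≤ (r+s)*((1-q)*q^(k+1)) := h
    have hc0 : 0 ≤ r*(1-q)*q^(k+1) := by
      apply mul_nonneg (mul_nonneg hr0 hδ0.le) hqpk
    have hY2 : Y ≤ 2*X := by
      have hqq : q^(k+1) ≤ q := by
        calc q^(k+1) ≤ q^1 := pow_le_pow_of_le_one hq0.le hq1.le (by omega)
          _ = q := pow_one q
      have e1 : (1-q)*q^(k+1) ≤ (1-q)*1 := mul_le_mul_of_nonneg_left (hqk1 (k+1)) hδ0.le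
      have h1 : (1-q)*q^(k+1) ≤ 1 - q^(k+1) := by linarith only [e1, hqq]
      have h2 : (r+s)*((1-q)*q^(k+1)) ≤ (r+s)*(1-q^(k+1)) :=
        mul_le_mul_of_nonneg_left h1 hrs
      have h3 : X = (r+s)*(1-q^(k+1)) + s := hXdef
      linarith only [hYX, h2, h3, hs0]
    have hγk : γ^(k+1) ≤ 1 := pow_le_one₀ (by linarith only [hγ0] : (0:ℝ) ≤ γ) hγ1.le
    have hinn : (0:ℝ) ≤ X⁻¹ := by positivity
    have hA : s^3 * q^(k+1) * (X⁻¹)^2 ≤ s * q^(k+1) := by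
      have hi : X⁻¹ ≤ s⁻¹ := inv_anti₀ hs0 hXs
      have h2 : (X⁻¹)^2 ≤ (s⁻¹)^2 := pow_le_pow_left₀ hinn hi 2
      calc s^3 * q^(k+1) * (X⁻¹)^2 ≤ s^3 * q^(k+1) * (s⁻¹)^2 := by
            apply mul_le_mul_of_nonneg_left h2 (by positivity)
        _ = s * q^(k+1) := by field_simp
    have hB : s^3 * q^(k+1) * (r * (X⁻¹)^3) ≤ (2*s^3/(1-q)) * ((X⁻¹)^2 - (Y⁻¹)^2) := by
      have haux := aux1 X Y (r*(1-q)*q^(k+1)) hXpos hXY hY2 hc0 hc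
      have hmul := mul_le_mul_of_nonneg_left haux (by positivity : (0:ℝ) ≤ s^3/(1-q))
      calc s^3 * q^(k+1) * (r * (X⁻¹)^3)
          = s^3/(1-q) * (r*(1-q)*q^(k+1) * (X⁻¹)^3) := by field_simp
        _ ≤ s^3/(1-q) * (2*((X⁻¹)^2 - (Y⁻¹)^2)) := hmul
        _ = (2*s^3/(1-q)) * ((X⁻¹)^2 - (Y⁻¹)^2) := by ring
    calc γ^(k+1) * s^3 * q^(k+1) * ((X⁻¹)^2 + r * (X⁻¹)^3)
        ≤ 1 * s^3 * q^(k+1) * ((X⁻¹)^2 + r * (X⁻¹)^3) := by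
          have hrest : (0:ℝ) ≤ s^3 * q^(k+1) * ((X⁻¹)^2 + r * (X⁻¹)^3) := by positivity
          have := mul_le_mul_of_nonneg_right hγk hrest
          calc γ^(k+1) * s^3 * q^(k+1) * ((X⁻¹)^2 + r * (X⁻¹)^3)
              = γ^(k+1) * (s^3 * q^(k+1) * ((X⁻¹)^2 + r * (X⁻¹)^3)) := by ring
            _ ≤ 1 * (s^3 * q^(k+1) * ((X⁻¹)^2 + r * (X⁻¹)^3)) := this
            _ = 1 * s^3 * q^(k+1) * ((X⁻¹)^2 + r * (X⁻¹)^3) := by ring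
      _ = s^3 * q^(k+1) * (X⁻¹)^2 + s^3 * q^(k+1) * (r * (X⁻¹)^3) := by ring
      _ ≤ s * q^(k+1) + (2*s^3/(1-q)) * ((X⁻¹)^2 - (Y⁻¹)^2) := add_le_add hA hB
  have hgeo : ∑ k ∈ Finset.range n, q^(k+1) ≤ 1/(1-q) := by
    have h1 : ∑ k ∈ Finset.range n, q^(k+1) ≤ ∑ k ∈ Finset.range n, q^k := by
      apply Finset.sum_le_sum
      intro k _
      exact pow_le_pow_of_le_one hq0.le hq1.le (Nat.le_succ k)
    have h3 : (∑ k ∈ Finset.range n, q^k) * (1-q) = 1 - q^n := by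
      have h := geom_sum_mul q n
      linear_combination (-1 : ℝ) * h
    have h4 : ∑ k ∈ Finset.range n, q^k ≤ 1/(1-q) := by
      rw [le_div_iff₀ hδ0, h3]
      have : (0:ℝ) ≤ q^n := pow_nonneg hq0.le n
      linarith
    linarith
  have hu0 : u 0 - u n ≤ (s⁻¹)^2 := by
    have hun : 0 ≤ u n := by rw [hu]; positivity
    have hu0' : u 0 ≤ (s⁻¹)^2 := by
      rw [hu]
      have hi : ((r + s) * (1 - q^(0+1)) + s)⁻¹ ≤ s⁻¹ := inv_anti₀ hs0 (hX 0)
      exact pow_le_pow_left₀ (inv_nonneg.mpr (hX0 0).le) hi 2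
    linarith
  calc ∑ k ∈ Finset.range n, (γ^(k+1) * ε ^ ((3 : ℝ)/2) * q^(k+1) *
        ((((r + s) * (1 - q^(k+1)) + s)⁻¹)^2 + r * (((r + s) * (1 - q^(k+1)) + s)⁻¹)^3))
      ≤ ∑ k ∈ Finset.range n, (s * q^(k+1) + (2*s^3/(1-q)) * (u k - u (k+1))) :=
        Finset.sum_le_sum fun k _ => hterm k
    _ = s * (∑ k ∈ Finset.range n, q^(k+1)) + (2*s^3/(1-q)) * (u 0 - u n) := by
        rw [Finset.sum_add_distrib, ← Finset.mul_sum, ← Finset.mul_sum,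
          Finset.sum_range_sub' u n]
    _ ≤ s * (1/(1-q)) + (2*s^3/(1-q)) * (s⁻¹)^2 := by
        apply add_le_add
        · exact mul_le_mul_of_nonneg_left hgeo hs0.le
        · exact mul_le_mul_of_nonneg_left hu0 (by positivity)
    _ = 3 * (s/(1-q)) := by field_simp; ring
    _ ≤ 100 := by
        have h4 : s/(1-q) ≤ 4 := by
          rw [div_le_iff₀ hδ0]; linarith
        linarith
end

section
/- Let ε ∈ (0, 1/2) and 1/2 < r₁ < r₂ < 10, and define z₁ = √[ (2r₁r₂/(r₂ − r₁))² + 2ε r₁r₂(r₁ + r₂)/(r₂ − r₁)² + (ε²/4)( ((r₁ + r₂)/(r₂ − r₁))² − 1 ) ] + (ε/2)(r₁ + r₂)/(r₂ − r₁) + 2r₁r₂/(r₂ − r₁). Then z₁ > ε/2 + 4r₁, and r₁ ( r₂² − (z₁ + ε/2 + r₂)² ) = r₂ ( r₁² − (z₁ − ε/2 − r₁)² ). -/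
set_option maxHeartbeats 1000000


/-- Let ε ∈ (0, 1/2) and 1/2 < r₁ < r₂ < 10, and define
z₁ = √[ (2r₁r₂/(r₂ − r₁))² + 2ε r₁r₂(r₁ + r₂)/(r₂ − r₁)²
      + (ε²/4)( ((r₁ + r₂)/(r₂ − r₁))² − 1 ) ]
    + (ε/2)(r₁ + r₂)/(r₂ − r₁) + 2r₁r₂/(r₂ − r₁).
Then z₁ > ε/2 + 4r₁, and
r₁ ( r₂² − (z₁ + ε/2 + r₂)² ) = r₂ ( r₁² − (z₁ − ε/2 − r₁)² ). -/
theorem stmt18 (ε r₁ r₂ : ℝ) (hε : ε ∈ Set.Ioo (0 : ℝ) (1/2))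
    (hr₁ : 1/2 < r₁) (hr₁₂ : r₁ < r₂) (hr₂ : r₂ < 10)
    (z₁ : ℝ)
    (hz₁ : z₁ = Real.sqrt ((2*r₁*r₂/(r₂ - r₁))^2 + 2*ε*r₁*r₂*(r₁ + r₂)/(r₂ - r₁)^2
        + ε^2/4 * (((r₁ + r₂)/(r₂ - r₁))^2 - 1))
      + ε/2 * ((r₁ + r₂)/(r₂ - r₁)) + 2*r₁*r₂/(r₂ - r₁)) :
    z₁ > ε/2 + 4*r₁ ∧
      r₁ * (r₂^2 - (z₁ + ε/2 + r₂)^2) = r₂ * (r₁^2 - (z₁ - ε/2 - r₁)^2) := by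
  obtain ⟨hε0, hε2⟩ := hε
  have hd : (0:ℝ) < r₂ - r₁ := by linarith
  have hd0 : r₂ - r₁ ≠ 0 := ne_of_gt hd
  set E : ℝ := (2*r₁*r₂/(r₂ - r₁))^2 + 2*ε*r₁*r₂*(r₁ + r₂)/(r₂ - r₁)^2
        + ε^2/4 * (((r₁ + r₂)/(r₂ - r₁))^2 - 1) with hEdef
  have hterm : ((r₁ + r₂)/(r₂ - r₁))^2 - 1 ≥ 0 := by
    have h1 : (1:ℝ) ≤ (r₁ + r₂)/(r₂ - r₁) := by
      rw [le_div_iff₀ hd]; linarith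
    nlinarith
  have hr10 : (0:ℝ) < r₁ := by linarith
  have hr20 : (0:ℝ) < r₂ := by linarith
  have h2 : 0 ≤ 2*ε*r₁*r₂*(r₁ + r₂)/(r₂ - r₁)^2 := by
    apply div_nonneg _ (by positivity)
    nlinarith [mul_pos (mul_pos (mul_pos hε0 hr10) hr20) (show (0:ℝ) < r₁ + r₂ by linarith)]
  have h3 : 0 ≤ ε^2/4 * (((r₁ + r₂)/(r₂ - r₁))^2 - 1) :=
    mul_nonneg (by positivity) hterm
  have hE : 0 ≤ E := by
    rw [hEdef]
    have := sq_nonneg (2*r₁*r₂/(r₂ - r₁))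
    linarith
  have hS2 : Real.sqrt E ^ 2 = E := Real.sq_sqrt hE
  have hSge : Real.sqrt E ≥ 2*r₁*r₂/(r₂ - r₁) := by
    have h1 : (2*r₁*r₂/(r₂ - r₁))^2 ≤ E := by rw [hEdef]; linarith
    calc 2*r₁*r₂/(r₂ - r₁) ≤ Real.sqrt ((2*r₁*r₂/(r₂ - r₁))^2) := by
          rw [Real.sqrt_sq (by positivity)]
      _ ≤ Real.sqrt E := Real.sqrt_le_sqrt h1
  constructor
  · rw [hz₁]
    have h3 : 2*r₁*r₂/(r₂ - r₁) > 2*r₁ := by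
      rw [gt_iff_lt, lt_div_iff₀ hd]; nlinarith
    have h4 : ε/2 * ((r₁ + r₂)/(r₂ - r₁)) > ε/2 := by
      have : (1:ℝ) < (r₁ + r₂)/(r₂ - r₁) := by rw [lt_div_iff₀ hd]; linarith
      nlinarith
    linarith
  · have key : r₁ * (r₂^2 - (z₁ + ε/2 + r₂)^2) - r₂ * (r₁^2 - (z₁ - ε/2 - r₁)^2)
        = (r₂ - r₁) * (Real.sqrt E ^ 2 - E) := by
      rw [hz₁, hEdef]
      field_simp
      ring
    have : Real.sqrt E ^ 2 - E = 0 := by rw [hS2]; ring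
    rw [this, mul_zero] at key
    linarith
end
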